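/- arXiv:math/0605353 — 7 statements merged into one kernel-verified Lean document; each statement's English description precedes it below -/
import Mathlib

section
/- For every integer n ≥ 1 and every real r > 0, there is no holomorphic map F : Δ(r) → ℂ^{n+1} on the open disk Δ(r) = {z ∈ ℂ : |z| < r} with F(z) ≠ 0 and e_F(z) = 1 for all z ∈ Δ(r). (Equivalently, there is no holomorphic isometric immersion of the flat disk Δ(r) into ℂPⁿ with the Fubini–Study metric: ℂPⁿ is WFL, 'without flat lines'.) -/
open MeasureTheory Filter Complex Topology Matrix Metric

noncomputable section CPnWFLAux

/-- Antiholomorphic reflection: if `f` has derivative `d` at `z`, then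
`w ↦ conj (f (conj w))` has derivative `conj d` at `conj z`. -/
private lemma hasDerivAt_conj_conj {f : ℂ → ℂ} {z d : ℂ} (hf : HasDerivAt f d z) :
    HasDerivAt (fun w => (starRingEnd ℂ) (f ((starRingEnd ℂ) w))) ((starRingEnd ℂ) d)
      ((starRingEnd ℂ) z) := by
  rw [hasDerivAt_iff_tendsto_slope] at hf ⊢
  have hc : Tendsto (starRingEnd ℂ) (𝓝[≠] ((starRingEnd ℂ) z)) (𝓝[≠] z) := by
    rw [tendsto_nhdsWithin_iff]
    constructor
    · have : Tendsto (starRingEnd ℂ) (𝓝 ((starRingEnd ℂ) z)) (𝓝 z) := by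
        have h := Complex.continuous_conj.tendsto ((starRingEnd ℂ) z)
        rwa [Complex.conj_conj] at h
      exact this.mono_left nhdsWithin_le_nhds
    · filter_upwards [self_mem_nhdsWithin] with w hw
      simp only [Set.mem_compl_iff, Set.mem_singleton_iff] at hw ⊢
      intro h
      exact hw (by rw [← h, Complex.conj_conj])
  have hkey : ∀ w : ℂ, slope (fun w => (starRingEnd ℂ) (f ((starRingEnd ℂ) w)))
      ((starRingEnd ℂ) z) w = (starRingEnd ℂ) (slope f z ((starRingEnd ℂ) w)) := by
    intro w
    simp only [slope, Complex.conj_conj, smul_eq_mul, vsub_eq_sub, _root_.map_mul, map_inv₀, map_sub]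
  have := (Complex.continuous_conj.continuousAt (x := d)).tendsto.comp (hf.comp hc)
  refine this.congr fun w => (hkey w).symm

/-- A function with vanishing derivative on a disk is constant there. -/
private lemma eq_at_zero_of_hasDerivAt_zero {g : ℂ → ℂ} {δ : ℝ} (hδ : 0 < δ)
    (h : ∀ x ∈ Metric.ball (0:ℂ) δ, HasDerivAt g 0 x) {x : ℂ}
    (hx : x ∈ Metric.ball (0:ℂ) δ) : g x = g 0 := by
  refine Convex.is_const_of_fderivWithin_eq_zero (convex_ball (0:ℂ) δ)
    (fun y hy => ((h y hy).differentiableAt).differentiableWithinAt) ?_ hx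
    (Metric.mem_ball_self hδ)
  intro y hy
  rw [fderivWithin_eq_fderiv (Metric.isOpen_ball.uniqueDiffOn y hy)
    (h y hy).differentiableAt]
  rw [(h y hy).hasFDerivAt.fderiv]
  refine ContinuousLinearMap.ext fun v => ?_
  simp

/-- Identity principle: a holomorphic function on a disk centered at `0` vanishing at all the
real points of the disk vanishes identically. -/
private lemma zero_on_ball_of_real_zero {g : ℂ → ℂ} {ρ : ℝ} (hρ : 0 < ρ)
    (hg : DifferentiableOn ℂ g (Metric.ball 0 ρ))
    (h0 : ∀ τ : ℝ, |τ| < ρ → g τ = 0) :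
    ∀ z ∈ Metric.ball (0:ℂ) ρ, g z = 0 := by
  have ha : AnalyticOnNhd ℂ g (Metric.ball 0 ρ) := hg.analyticOnNhd Metric.isOpen_ball
  have hfreq : ∃ᶠ z in 𝓝[≠] (0:ℂ), g z = 0 := by
    have hpos : ∀ k : ℕ, 0 < ρ / 2 / (k + 1) := fun k => by positivity
    have hseq : Tendsto (fun k : ℕ => ((ρ / 2 / (k + 1) : ℝ) : ℂ)) atTop (𝓝[≠] 0) := by
      rw [tendsto_nhdsWithin_iff]
      constructor
      · have : Tendsto (fun k : ℕ => (ρ / 2 / (k + 1) : ℝ)) atTop (𝓝 0) := by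
          have := tendsto_one_div_add_atTop_nhds_zero_nat.const_mul (ρ / 2)
          simpa [div_eq_mul_inv, mul_comm] using this
        have h2 : Tendsto (fun x : ℝ => (x:ℂ)) (𝓝 0) (𝓝 0) := by
          simpa using Complex.continuous_ofReal.tendsto 0
        exact h2.comp this
      · filter_upwards with k
        simp only [Set.mem_compl_iff, Set.mem_singleton_iff, Complex.ofReal_eq_zero]
        exact (hpos k).ne'
    refine hseq.frequently (Frequently.of_forall fun k => ?_)
    refine h0 _ ?_
    rw [abs_of_pos (hpos k)]
    calc ρ / 2 / (k + 1) ≤ ρ / 2 / 1 := by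
          apply div_le_div_of_nonneg_left (by linarith) one_pos ?_ |>.trans_eq rfl
          · exact le_add_of_nonneg_left (Nat.cast_nonneg k)
      _ < ρ := by linarith
  exact fun z hz => ha.eqOn_zero_of_preconnected_of_frequently_eq_zero
    (convex_ball (0:ℂ) ρ).isPreconnected (Metric.mem_ball_self hρ) hfreq hz

/-- A square matrix that factors through a smaller rectangular shape has zero determinant. -/
private lemma det_eq_zero_of_rect {m N : ℕ} (hmN : m < N) (V : Matrix (Fin N) (Fin m) ℂ)
    (W : Matrix (Fin m) (Fin N) ℂ) : (V * W).det = 0 := by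
  by_contra hdet
  have hno : ¬ ∃ v ≠ 0, (V * W) *ᵥ v = 0 := by
    rw [Matrix.exists_mulVec_eq_zero_iff]; exact hdet
  have hinj : Function.Injective W.mulVecLin := by
    rw [← LinearMap.ker_eq_bot, Submodule.eq_bot_iff]
    intro v hv
    by_contra hv0
    exact hno ⟨v, hv0, by
      rw [← Matrix.mulVec_mulVec]
      rw [LinearMap.mem_ker, Matrix.mulVecLin_apply] at hv
      rw [hv, Matrix.mulVec_zero]⟩
  have := LinearMap.finrank_le_finrank_of_injective hinj
  simp only [Module.finrank_fin_fun] at this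
  omega

/-- coordinates of `F` -/
private def auxC (n : ℕ) (F : ℂ → EuclideanSpace ℂ (Fin (n+1))) (i : Fin (n+1)) (z : ℂ) : ℂ :=
  F z i

/-- conjugate-reflected coordinates of `F` -/
private def auxB (n : ℕ) (F : ℂ → EuclideanSpace ℂ (Fin (n+1))) (i : Fin (n+1)) (w : ℂ) : ℂ :=
  (starRingEnd ℂ) (F ((starRingEnd ℂ) w) i)

/-- The sesquiholomorphic extension `H(z,w) = ∑ᵢ Fᵢ(z) conj (Gᵢ (conj w))`. -/
private def auxH (n : ℕ) (F G : ℂ → EuclideanSpace ℂ (Fin (n+1))) (z w : ℂ) : ℂ :=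
  ∑ i, auxC n F i z * auxB n G i w

variable {n : ℕ} {F G D : ℂ → EuclideanSpace ℂ (Fin (n+1))} {z w : ℂ}
  {d : EuclideanSpace ℂ (Fin (n+1))}

private lemma auxC_hasDerivAt (h : HasDerivAt F d z) (i : Fin (n+1)) :
    HasDerivAt (auxC n F i) (d i) z := by
  have := (EuclideanSpace.proj (𝕜 := ℂ) i).hasFDerivAt.comp_hasDerivAt z h
  exact this

private lemma auxB_hasDerivAt (h : HasDerivAt F d ((starRingEnd ℂ) w)) (i : Fin (n+1)) :
    HasDerivAt (auxB n F i) ((starRingEnd ℂ) (d i)) w := by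
  have h2 := hasDerivAt_conj_conj (auxC_hasDerivAt h i)
  rw [Complex.conj_conj] at h2
  exact h2

private lemma auxH_hasDerivAt_fst (hF : HasDerivAt F (D z) z) :
    HasDerivAt (fun z => auxH n F G z w) (auxH n D G z w) z := by
  exact HasDerivAt.fun_sum fun i _ => (auxC_hasDerivAt hF i).mul_const (auxB n G i w)

private lemma auxH_hasDerivAt_snd (hG : HasDerivAt G (D ((starRingEnd ℂ) w)) ((starRingEnd ℂ) w)) :
    HasDerivAt (fun w => auxH n F G z w) (auxH n F D z w) w := by
  exact HasDerivAt.fun_sum fun i _ => (auxB_hasDerivAt hG i).const_mul (auxC n F i z)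

private lemma auxH_differentiableAt_joint (hF : DifferentiableAt ℂ F z)
    (hG : DifferentiableAt ℂ G ((starRingEnd ℂ) w)) :
    DifferentiableAt ℂ (fun p : ℂ × ℂ => auxH n F G p.1 p.2) (z, w) := by
  apply DifferentiableAt.fun_sum
  intro i _
  exact (((auxC_hasDerivAt hF.hasDerivAt i).differentiableAt.comp (z, w) differentiableAt_fst :
      DifferentiableAt ℂ (auxC n F i ∘ Prod.fst) (z, w))).fun_mul
    (((auxB_hasDerivAt hG.hasDerivAt i).differentiableAt.comp (z, w) differentiableAt_snd :
      DifferentiableAt ℂ (auxB n G i ∘ Prod.snd) (z, w)))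

/-- On the antidiagonal `w = conj z`, `auxH` computes the inner product. -/
private lemma auxH_anti (n : ℕ) (F G : ℂ → EuclideanSpace ℂ (Fin (n+1))) (z : ℂ) :
    auxH n F G z ((starRingEnd ℂ) z) = (inner ℂ (G z) (F z) : ℂ) := by
  rw [PiLp.inner_apply]
  simp only [auxH, auxC, auxB, Complex.conj_conj, RCLike.inner_apply']
  exact Finset.sum_congr rfl fun i _ => mul_comm _ _

end CPnWFLAux

open MeasureTheory Filter

/-- Fubini–Study energy density `e_F = |df|²` of the holomorphic curve `[F]` induced by a
nonvanishing holomorphic map `F` into a complex inner product space. -/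
noncomputable def fsEnergyDensity {E : Type*} [NormedAddCommGroup E] [InnerProductSpace ℂ E]
    (F : ℂ → E) (z : ℂ) : ℝ :=
  (‖F z‖ ^ 2 * ‖deriv F z‖ ^ 2 - ‖(inner ℂ (deriv F z) (F z) : ℂ)‖ ^ 2) /
    (Real.pi * ‖F z‖ ^ 4)

set_option maxHeartbeats 2000000 in
/-- `ℂPⁿ` is WFL: there is no holomorphic isometric immersion of a flat disk into `ℂPⁿ`
with the Fubini–Study metric. -/
theorem CPn_WFL (n : ℕ) (hn : 1 ≤ n) (r : ℝ) (hr : 0 < r) :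
    ¬ ∃ F : ℂ → EuclideanSpace ℂ (Fin (n + 1)),
      DifferentiableOn ℂ F (Metric.ball (0 : ℂ) r) ∧
      (∀ z ∈ Metric.ball (0 : ℂ) r, F z ≠ 0) ∧
      (∀ z ∈ Metric.ball (0 : ℂ) r, fsEnergyDensity F z = 1) := by
  rintro ⟨F, hF, hF0, hE⟩
  -- basic differentiability facts
  have hFd : ∀ z ∈ Metric.ball (0:ℂ) r, HasDerivAt F (deriv F z) z := fun z hz =>
    (hF.differentiableAt (Metric.isOpen_ball.mem_nhds hz)).hasDerivAt
  have hF'diff : DifferentiableOn ℂ (deriv F) (Metric.ball (0:ℂ) r) :=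
    ((hF.analyticOnNhd Metric.isOpen_ball).deriv).differentiableOn
  have hF'd : ∀ z ∈ Metric.ball (0:ℂ) r, HasDerivAt (deriv F) (deriv (deriv F) z) z := fun z hz =>
    (hF'diff.differentiableAt (Metric.isOpen_ball.mem_nhds hz)).hasDerivAt
  have hconjmem : ∀ {ρ : ℝ} {w : ℂ}, w ∈ Metric.ball (0:ℂ) ρ →
      (starRingEnd ℂ) w ∈ Metric.ball (0:ℂ) ρ := by
    intro ρ w hw
    rw [mem_ball_zero_iff] at hw ⊢
    simpa using hw
  set Hm := auxH n F F with hHm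
  set Hz := auxH n (deriv F) F with hHz
  set Hw := auxH n F (deriv F) with hHw
  set Hzw := auxH n (deriv F) (deriv F) with hHzw
  -- Part 1 : the Fubini-Study equation on the antidiagonal
  have hkey : ∀ z ∈ Metric.ball (0:ℂ) r,
      Hm z ((starRingEnd ℂ) z) * Hzw z ((starRingEnd ℂ) z)
        - Hz z ((starRingEnd ℂ) z) * Hw z ((starRingEnd ℂ) z)
        - (Real.pi : ℂ) * (Hm z ((starRingEnd ℂ) z))^2 = 0 := by
    intro z hz
    have hFzne : ‖F z‖ ≠ 0 := norm_ne_zero_iff.mpr (hF0 z hz)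
    have hreal : ‖F z‖^2 * ‖deriv F z‖^2 - ‖(inner ℂ (deriv F z) (F z) : ℂ)‖^2
        = Real.pi * ‖F z‖^4 := by
      have h1 := hE z hz
      rw [fsEnergyDensity, div_eq_one_iff_eq (by positivity)] at h1
      exact h1
    have e1 : Hm z ((starRingEnd ℂ) z) = ((‖F z‖^2 : ℝ) : ℂ) := by
      rw [hHm, auxH_anti]
      exact_mod_cast inner_self_eq_norm_sq_to_K (F z)
    have e4 : Hzw z ((starRingEnd ℂ) z) = ((‖deriv F z‖^2 : ℝ) : ℂ) := by
      rw [hHzw, auxH_anti]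
      exact_mod_cast inner_self_eq_norm_sq_to_K (deriv F z)
    have e2 : Hz z ((starRingEnd ℂ) z) = (inner ℂ (F z) (deriv F z) : ℂ) := by
      rw [hHz, auxH_anti]
    have e3 : Hw z ((starRingEnd ℂ) z) = (inner ℂ (deriv F z) (F z) : ℂ) := by
      rw [hHw, auxH_anti]
    rw [e1, e2, e3, e4]
    have e5 : (inner ℂ (F z) (deriv F z) : ℂ) * (inner ℂ (deriv F z) (F z) : ℂ)
        = ((‖(inner ℂ (deriv F z) (F z) : ℂ)‖^2 : ℝ) : ℂ) := by
      rw [← inner_conj_symm (deriv F z) (F z)]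
      rw [Complex.mul_conj, Complex.normSq_eq_norm_sq]
      simp only [Complex.norm_conj, Complex.ofReal_pow]
    rw [e5]
    have := congrArg (fun t : ℝ => (t : ℂ)) hreal
    push_cast at this ⊢
    linear_combination this
  -- Part 2 : propagate the equation off the antidiagonal by the identity principle
  set Φ : ℂ × ℂ → ℂ := fun p =>
    Hm p.1 p.2 * Hzw p.1 p.2 - Hz p.1 p.2 * Hw p.1 p.2 - (Real.pi : ℂ) * (Hm p.1 p.2)^2
    with hΦdef
  have hΦdiff : ∀ p : ℂ × ℂ, p.1 ∈ Metric.ball (0:ℂ) r → p.2 ∈ Metric.ball (0:ℂ) r →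
      DifferentiableAt ℂ Φ p := by
    intro p h1 h2
    have hFz : DifferentiableAt ℂ F p.1 := hF.differentiableAt (Metric.isOpen_ball.mem_nhds h1)
    have hF'z : DifferentiableAt ℂ (deriv F) p.1 :=
      hF'diff.differentiableAt (Metric.isOpen_ball.mem_nhds h1)
    have hFw : DifferentiableAt ℂ F ((starRingEnd ℂ) p.2) :=
      hF.differentiableAt (Metric.isOpen_ball.mem_nhds (hconjmem h2))
    have hF'w : DifferentiableAt ℂ (deriv F) ((starRingEnd ℂ) p.2) :=
      hF'diff.differentiableAt (Metric.isOpen_ball.mem_nhds (hconjmem h2))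
    have d1 : DifferentiableAt ℂ (fun p : ℂ × ℂ => Hm p.1 p.2) p := by
      rw [hHm]; exact auxH_differentiableAt_joint hFz hFw
    have d2 : DifferentiableAt ℂ (fun p : ℂ × ℂ => Hz p.1 p.2) p := by
      rw [hHz]; exact auxH_differentiableAt_joint hF'z hFw
    have d3 : DifferentiableAt ℂ (fun p : ℂ × ℂ => Hw p.1 p.2) p := by
      rw [hHw]; exact auxH_differentiableAt_joint hFz hF'w
    have d4 : DifferentiableAt ℂ (fun p : ℂ × ℂ => Hzw p.1 p.2) p := by
      rw [hHzw]; exact auxH_differentiableAt_joint hF'z hF'w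
    rw [hΦdef]
    exact ((d1.mul d4).sub (d2.mul d3)).sub ((d1.pow 2).const_mul _)
  have hmemA : ∀ s t : ℂ, s ∈ Metric.ball (0:ℂ) (r/2) → t ∈ Metric.ball (0:ℂ) (r/2) →
      (s + Complex.I*t) ∈ Metric.ball (0:ℂ) r ∧ (s - Complex.I*t) ∈ Metric.ball (0:ℂ) r := by
    intro s t hs ht
    rw [mem_ball_zero_iff] at hs ht
    have hIt : ‖Complex.I * t‖ = ‖t‖ := by
      rw [norm_mul, Complex.norm_I, one_mul]
    constructor
    · rw [mem_ball_zero_iff]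
      calc ‖s + Complex.I*t‖ ≤ ‖s‖ + ‖Complex.I*t‖ := norm_add_le _ _
        _ < r := by rw [hIt]; linarith
    · rw [mem_ball_zero_iff]
      calc ‖s - Complex.I*t‖ ≤ ‖s‖ + ‖Complex.I*t‖ := norm_sub_le _ _
        _ < r := by rw [hIt]; linarith
  have hStepA : ∀ τ : ℝ, |τ| < r/2 → ∀ s ∈ Metric.ball (0:ℂ) (r/2),
      Φ (s + Complex.I*(τ:ℂ), s - Complex.I*(τ:ℂ)) = 0 := by
    intro τ hτ
    have hτmem : ((τ:ℝ):ℂ) ∈ Metric.ball (0:ℂ) (r/2) := by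
      rw [mem_ball_zero_iff]; simpa using hτ
    apply zero_on_ball_of_real_zero (by linarith : (0:ℝ) < r/2)
    · intro s hs
      apply DifferentiableAt.differentiableWithinAt
      have hdmap : DifferentiableAt ℂ
          (fun s : ℂ => (s + Complex.I*(τ:ℂ), s - Complex.I*(τ:ℂ))) s :=
        (differentiableAt_id.add (differentiableAt_const _)).prodMk
          (differentiableAt_id.sub (differentiableAt_const _))
      have hmm := hmemA s τ hs hτmem
      exact (hΦdiff (s + Complex.I*(τ:ℂ), s - Complex.I*(τ:ℂ)) hmm.1 hmm.2).comp s hdmap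
    · intro σ hσ
      have hσmem : ((σ:ℝ):ℂ) ∈ Metric.ball (0:ℂ) (r/2) := by
        rw [mem_ball_zero_iff]; simpa using hσ
      have hconj : ((σ:ℝ):ℂ) - Complex.I*(τ:ℂ)
          = (starRingEnd ℂ) (((σ:ℝ):ℂ) + Complex.I*(τ:ℂ)) := by
        rw [map_add, _root_.map_mul, Complex.conj_ofReal, Complex.conj_ofReal, Complex.conj_I]
        ring
      have hzmem : (((σ:ℝ):ℂ) + Complex.I*(τ:ℂ)) ∈ Metric.ball (0:ℂ) r :=
        (hmemA _ _ hσmem hτmem).1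
      have hk := hkey _ hzmem
      rw [hΦdef]
      simp only []
      rw [hconj]
      exact hk
  have hStepB : ∀ s ∈ Metric.ball (0:ℂ) (r/2), ∀ t ∈ Metric.ball (0:ℂ) (r/2),
      Φ (s + Complex.I*t, s - Complex.I*t) = 0 := by
    intro s hs
    apply zero_on_ball_of_real_zero (by linarith : (0:ℝ) < r/2)
    · intro t ht
      apply DifferentiableAt.differentiableWithinAt
      have hdmap : DifferentiableAt ℂ (fun t : ℂ => (s + Complex.I*t, s - Complex.I*t)) t :=
        ((differentiableAt_const _).fun_add ((differentiableAt_const _).fun_mul differentiableAt_id)).prodMk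
          ((differentiableAt_const _).fun_sub ((differentiableAt_const _).fun_mul differentiableAt_id))
      have hmm := hmemA s t hs ht
      exact (hΦdiff (s + Complex.I*t, s - Complex.I*t) hmm.1 hmm.2).comp t hdmap
    · intro τ hτ
      exact hStepA τ hτ s hs
  have htwo : ‖(2:ℂ)‖ = 2 := by norm_num
  have hΦ0 : ∀ z ∈ Metric.ball (0:ℂ) (r/2), ∀ w ∈ Metric.ball (0:ℂ) (r/2),
      Hm z w * Hzw z w - Hz z w * Hw z w - (Real.pi : ℂ) * (Hm z w)^2 = 0 := by
    intro z hz w hw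
    rw [mem_ball_zero_iff] at hz hw
    have h1 : (z+w)/2 ∈ Metric.ball (0:ℂ) (r/2) := by
      rw [mem_ball_zero_iff, norm_div, htwo]
      have := norm_add_le z w
      calc ‖z+w‖/2 ≤ (‖z‖+‖w‖)/2 := by linarith
        _ < r/2 := by linarith
    have h2 : (z-w)/(2*Complex.I) ∈ Metric.ball (0:ℂ) (r/2) := by
      rw [mem_ball_zero_iff, norm_div, norm_mul, htwo, Complex.norm_I, mul_one]
      have := norm_sub_le z w
      calc ‖z-w‖/2 ≤ (‖z‖+‖w‖)/2 := by linarith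
        _ < r/2 := by linarith
    have hB := hStepB _ h1 _ h2
    have hIred : Complex.I*((z-w)/(2*Complex.I)) = (z-w)/2 := by
      field_simp
    have e1 : (z+w)/2 + Complex.I*((z-w)/(2*Complex.I)) = z := by
      rw [hIred]; ring
    have e2 : (z+w)/2 - Complex.I*((z-w)/(2*Complex.I)) = w := by
      rw [hIred]; ring
    rw [e1, e2] at hB
    simpa [hΦdef] using hB
  -- Part 3 : solve the PDE on a small polydisk where `Hm` does not vanish
  have h0r : (0:ℂ) ∈ Metric.ball (0:ℂ) r := Metric.mem_ball_self hr
  have hH00 : Hm 0 0 = ((‖F 0‖^2 : ℝ) : ℂ) := by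
    have h := auxH_anti n F F 0
    rw [map_zero] at h
    rw [hHm, h]
    exact_mod_cast inner_self_eq_norm_sq_to_K (F 0)
  have hH00ne : Hm 0 0 ≠ 0 := by
    rw [hH00]
    have hne : F 0 ≠ 0 := hF0 0 h0r
    exact_mod_cast pow_ne_zero 2 (norm_ne_zero_iff.mpr hne)
  have hHmcont : ContinuousAt (fun p : ℂ × ℂ => Hm p.1 p.2) ((0:ℂ), (0:ℂ)) := by
    have hFz : DifferentiableAt ℂ F (0:ℂ) := hF.differentiableAt (Metric.isOpen_ball.mem_nhds h0r)
    have hFw : DifferentiableAt ℂ F ((starRingEnd ℂ) (0:ℂ)) := by rw [map_zero]; exact hFz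
    have hj := auxH_differentiableAt_joint (n := n) hFz hFw
    rw [hHm]; exact hj.continuousAt
  obtain ⟨δ, hδpos, hδle, hδne⟩ : ∃ δ > 0, δ ≤ r/2 ∧
      ∀ z w : ℂ, z ∈ Metric.ball (0:ℂ) δ → w ∈ Metric.ball (0:ℂ) δ → Hm z w ≠ 0 := by
    have hev : ∀ᶠ p : ℂ × ℂ in 𝓝 ((0:ℂ),(0:ℂ)), Hm p.1 p.2 ≠ 0 := hHmcont.eventually_ne hH00ne
    rw [Metric.eventually_nhds_iff_ball] at hev
    obtain ⟨ε, hε, hb⟩ := hev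
    refine ⟨min ε (r/2), by positivity, min_le_right _ _, ?_⟩
    intro z w hz hw
    have hmem : ((z,w) : ℂ × ℂ) ∈ Metric.ball ((0:ℂ),(0:ℂ)) ε := by
      rw [Metric.mem_ball] at hz hw ⊢
      rw [Prod.dist_eq]
      exact max_lt (lt_of_lt_of_le hz (min_le_left _ _)) (lt_of_lt_of_le hw (min_le_left _ _))
    exact hb _ hmem
  have hδr : Metric.ball (0:ℂ) δ ⊆ Metric.ball (0:ℂ) r :=
    (Metric.ball_subset_ball hδle).trans (Metric.ball_subset_ball (by linarith))
  have hδr2 : Metric.ball (0:ℂ) δ ⊆ Metric.ball (0:ℂ) (r/2) := Metric.ball_subset_ball hδle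
  have h0δ : (0:ℂ) ∈ Metric.ball (0:ℂ) δ := Metric.mem_ball_self hδpos
  have hdHm_z : ∀ w, ∀ z ∈ Metric.ball (0:ℂ) r, HasDerivAt (fun z => Hm z w) (Hz z w) z := by
    intro w z hz
    rw [hHm, hHz]
    exact auxH_hasDerivAt_fst (hFd z hz)
  have hdHm_w : ∀ z, ∀ w ∈ Metric.ball (0:ℂ) r, HasDerivAt (fun w => Hm z w) (Hw z w) w := by
    intro z w hw
    rw [hHm, hHw]
    exact auxH_hasDerivAt_snd (hFd _ (hconjmem hw))
  have hdHz_w : ∀ z, ∀ w ∈ Metric.ball (0:ℂ) r, HasDerivAt (fun w => Hz z w) (Hzw z w) w := by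
    intro z w hw
    rw [hHz, hHzw]
    exact auxH_hasDerivAt_snd (hFd _ (hconjmem hw))
  set m : ℂ → ℂ := fun z => Hz z 0 / Hm z 0 with hm
  have hmEq : ∀ z ∈ Metric.ball (0:ℂ) δ, Hz z 0 = m z * Hm z 0 := by
    intro z hz
    simp only [hm]
    rw [div_mul_cancel₀ _ (hδne z 0 hz h0δ)]
  have hODE1 : ∀ z ∈ Metric.ball (0:ℂ) δ, ∀ w ∈ Metric.ball (0:ℂ) δ,
      Hz z w = (m z + (Real.pi:ℂ) * w) * Hm z w := by
    intro z hz w hw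
    have hder : ∀ w' ∈ Metric.ball (0:ℂ) δ,
        HasDerivAt (fun w => Hz z w / Hm z w - (Real.pi:ℂ) * w) 0 w' := by
      intro w' hw'
      have hne := hδne z w' hz hw'
      have h1 := hdHz_w z w' (hδr hw')
      have h2 := hdHm_w z w' (hδr hw')
      have h3 := h1.fun_div h2 hne
      have hval : (Hzw z w' * Hm z w' - Hz z w' * Hw z w') / (Hm z w')^2 = (Real.pi:ℂ) := by
        rw [div_eq_iff (pow_ne_zero 2 hne)]
        have h4 := hΦ0 z (hδr2 hz) w' (hδr2 hw')
        linear_combination h4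
      rw [hval] at h3
      have h5 : HasDerivAt (fun w : ℂ => (Real.pi:ℂ) * w) ((Real.pi:ℂ)) w' := by
        simpa using (hasDerivAt_id w').const_mul ((Real.pi:ℂ))
      have h6 := h3.fun_sub h5
      simpa using h6
    have hc := eq_at_zero_of_hasDerivAt_zero hδpos hder hw
    simp only [mul_zero, sub_zero] at hc
    have hne := hδne z w hz hw
    have hq : Hz z w / Hm z w = m z + (Real.pi:ℂ) * w := by
      simp only [hm]
      linear_combination hc
    calc Hz z w = (Hz z w / Hm z w) * Hm z w := (div_mul_cancel₀ _ hne).symm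
      _ = (m z + (Real.pi:ℂ)*w) * Hm z w := by rw [hq]
  have hODE2 : ∀ z ∈ Metric.ball (0:ℂ) δ, ∀ w ∈ Metric.ball (0:ℂ) δ,
      Hm z w * Hm 0 0 = Complex.exp ((Real.pi:ℂ) * w * z) * Hm z 0 * Hm 0 w := by
    intro z hz w hw
    have hder : ∀ z' ∈ Metric.ball (0:ℂ) δ,
        HasDerivAt (fun z => Hm z w * Complex.exp (-((Real.pi:ℂ) * w) * z) / Hm z 0) 0 z' := by
      intro z' hz'
      have hne0 := hδne z' 0 hz' h0δ
      have h1 := hdHm_z w z' (hδr hz')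
      have hexp : HasDerivAt (fun z : ℂ => Complex.exp (-((Real.pi:ℂ)*w) * z))
          (-((Real.pi:ℂ)*w) * Complex.exp (-((Real.pi:ℂ)*w) * z')) z' := by
        have h := ((hasDerivAt_id z').const_mul (-((Real.pi:ℂ)*w))).cexp
        simpa [mul_comm] using h
      have hnum := h1.fun_mul hexp
      have hden := hdHm_z 0 z' (hδr hz')
      have hdiv := hnum.fun_div hden hne0
      have hval : (Hz z' w * Complex.exp (-((Real.pi:ℂ)*w) * z')
            + Hm z' w * (-((Real.pi:ℂ)*w) * Complex.exp (-((Real.pi:ℂ)*w) * z'))) * Hm z' 0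
            - Hm z' w * Complex.exp (-((Real.pi:ℂ)*w) * z') * Hz z' 0 = 0 := by
        rw [hODE1 z' hz' w hw, hmEq z' hz']
        ring
      rw [show ((Hz z' w * Complex.exp (-((Real.pi:ℂ)*w) * z')
            + Hm z' w * (-((Real.pi:ℂ)*w) * Complex.exp (-((Real.pi:ℂ)*w) * z'))) * Hm z' 0
            - Hm z' w * Complex.exp (-((Real.pi:ℂ)*w) * z') * Hz z' 0) / (Hm z' 0)^2 = 0 from by
        rw [hval]; simp] at hdiv
      exact hdiv
    have hc := eq_at_zero_of_hasDerivAt_zero hδpos hder hz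
    have hne0z := hδne z 0 hz h0δ
    simp only [mul_zero, Complex.exp_zero, mul_one] at hc
    have hprod : Complex.exp (-((Real.pi:ℂ)*w) * z) * Complex.exp ((Real.pi:ℂ) * w * z) = 1 := by
      rw [← Complex.exp_add]
      rw [show -((Real.pi:ℂ)*w) * z + (Real.pi:ℂ)*w*z = 0 from by ring]
      exact Complex.exp_zero
    rw [div_eq_div_iff hne0z hH00ne] at hc
    linear_combination Complex.exp ((Real.pi:ℂ)*w*z) * hc - Hm z w * Hm 0 0 * hprod
  -- Part 4 : a Gram-type matrix with contradictory determinant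
  set ε : ℝ := δ / (2 * (n + 2)) with hε
  have hεpos : 0 < ε := by rw [hε]; positivity
  set ζ : Fin (n+2) → ℝ := fun i => i * ε with hζ
  have hζnonneg : ∀ i : Fin (n+2), 0 ≤ ζ i := fun i => by
    simp only [hζ]; positivity
  have hζmem : ∀ i : Fin (n+2), ((ζ i : ℝ) : ℂ) ∈ Metric.ball (0:ℂ) δ := by
    intro i
    rw [mem_ball_zero_iff, Complex.norm_real, Real.norm_eq_abs, _root_.abs_of_nonneg (hζnonneg i)]
    have hi : (i:ℝ) ≤ n + 1 := by
      have h1 : (i:ℕ) ≤ n + 1 := Nat.lt_succ_iff.mp i.isLt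
      exact_mod_cast h1
    have h2 : (0:ℝ) < 2*((n:ℝ)+2) := by positivity
    calc ζ i = (i:ℝ) * ε := rfl
      _ ≤ ((n:ℝ)+1) * ε := by nlinarith
      _ < δ := by
        rw [hε, ← mul_div_assoc, div_lt_iff₀ h2]
        nlinarith
  set M : Matrix (Fin (n+2)) (Fin (n+2)) ℂ := Matrix.of (fun i j => Hm ((ζ i : ℝ):ℂ) ((ζ j : ℝ):ℂ))
    with hM
  have hdet0 : M.det = 0 := by
    set V : Matrix (Fin (n+2)) (Fin (n+1)) ℂ := Matrix.of (fun i k => auxC n F k ((ζ i : ℝ):ℂ))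
      with hV
    set W : Matrix (Fin (n+1)) (Fin (n+2)) ℂ := Matrix.of (fun k j => auxB n F k ((ζ j : ℝ):ℂ))
      with hW
    have hfact : M = V * W := by
      ext i j
      rw [Matrix.mul_apply]
      simp only [hM, hV, hW, hHm, auxH, Matrix.of_apply]
    rw [hfact]
    exact det_eq_zero_of_rect (by omega) _ _
  have hdetne : M.det ≠ 0 := by
    set x : Fin (n+2) → ℂ := fun i => Complex.exp ((Real.pi:ℂ) * (ε:ℂ)^2 * ((i:ℕ):ℂ)) with hx
    have hre : ∀ k : Fin (n+2), Complex.exp ((Real.pi:ℂ) * (ε:ℂ)^2 * ((k:ℕ):ℂ))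
        = ((Real.exp (Real.pi * ε^2 * (k:ℕ)) : ℝ) : ℂ) := by
      intro k
      rw [Complex.ofReal_exp]
      congr 1
      push_cast
      ring
    have hxinj : Function.Injective x := by
      intro i j hij
      simp only [hx] at hij
      rw [hre i, hre j] at hij
      have h1 : Real.exp (Real.pi * ε^2 * (i:ℕ)) = Real.exp (Real.pi * ε^2 * (j:ℕ)) := by
        exact_mod_cast hij
      have h2 := Real.exp_injective h1
      have h3 : Real.pi * ε^2 ≠ 0 := by positivity
      have h4 : ((i:ℕ):ℝ) = ((j:ℕ):ℝ) := mul_left_cancel₀ h3 h2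
      have h5 : (i:ℕ) = (j:ℕ) := by exact_mod_cast h4
      exact Fin.ext h5
    have hMfact : M = Matrix.diagonal (fun i => Hm ((ζ i:ℝ):ℂ) 0 / Hm 0 0)
        * Matrix.vandermonde x * Matrix.diagonal (fun j => Hm 0 ((ζ j:ℝ):ℂ)) := by
      ext i j
      rw [Matrix.mul_diagonal, Matrix.diagonal_mul]
      simp only [hM, Matrix.vandermonde_apply, Matrix.of_apply]
      have hxpow : x i ^ (j:ℕ) = Complex.exp ((Real.pi:ℂ) * ((ζ j:ℝ):ℂ) * ((ζ i:ℝ):ℂ)) := by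
        simp only [hx]
        rw [← Complex.exp_nat_mul]
        congr 1
        simp only [hζ]
        push_cast
        ring
      rw [hxpow]
      have h2 := hODE2 _ (hζmem i) _ (hζmem j)
      rw [div_mul_eq_mul_div, div_mul_eq_mul_div, eq_div_iff hH00ne]
      linear_combination h2
    rw [hMfact, Matrix.det_mul, Matrix.det_mul, Matrix.det_diagonal, Matrix.det_diagonal,
      Matrix.det_vandermonde]
    refine mul_ne_zero (mul_ne_zero ?_ ?_) ?_
    · rw [Finset.prod_ne_zero_iff]
      intro i _
      exact div_ne_zero (hδne _ 0 (hζmem i) h0δ) hH00ne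
    · rw [Finset.prod_ne_zero_iff]
      intro i _
      rw [Finset.prod_ne_zero_iff]
      intro j hj
      rw [Finset.mem_Ioi] at hj
      refine sub_ne_zero_of_ne fun hc => ?_
      exact (ne_of_gt hj) (hxinj hc)
    · rw [Finset.prod_ne_zero_iff]
      intro j _
      exact hδne 0 _ h0δ (hζmem j)
  exact hdetne hdet0
end

section
/- Let U ⊆ ℂ × ℂ be a connected open neighborhood of (0,0) and let f : ℂ × ℂ → ℂ be analytic on U. Suppose there exists ε > 0 such that for every z ∈ ℂ with |z| < ε one has (z, z̄) ∈ U and f(z, z̄) = 0, where z̄ is the complex conjugate of z. Then f(z₁, z₂) = 0 for all (z₁, z₂) ∈ U. -/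
open Complex Metric Filter

/-- An analytic function on a disc around `0` vanishing on real points vanishes. -/
lemma aux_vanish_real {δ : ℝ} (hδ : 0 < δ) {h : ℂ → ℂ}
    (hh : AnalyticOnNhd ℂ h (ball (0 : ℂ) δ))
    (hz : ∀ x : ℝ, |x| < δ → h x = 0) : ∀ z ∈ ball (0 : ℂ) δ, h z = 0 := by
  have hpre : IsPreconnected (ball (0 : ℂ) δ) := (convex_ball _ _).isPreconnected
  have h0 : (0 : ℂ) ∈ ball (0 : ℂ) δ := by simpa using hδ
  have hfreq : ∃ᶠ z in nhdsWithin (0 : ℂ) {(0:ℂ)}ᶜ, h z = 0 := by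
    have hre : Tendsto (fun n : ℕ => (δ / 2 * (1 / (n + 1)) : ℝ)) atTop (nhds 0) := by
      simpa using tendsto_one_div_add_atTop_nhds_zero_nat.const_mul (δ / 2)
    have htend : Tendsto (fun n : ℕ => ((δ / 2 * (1 / (n + 1)) : ℝ) : ℂ)) atTop
        (nhdsWithin (0 : ℂ) {(0:ℂ)}ᶜ) := by
      apply tendsto_nhdsWithin_of_tendsto_nhds_of_eventually_within
      · exact (Complex.continuous_ofReal.tendsto 0).comp hre
      · filter_upwards with n
        simp only [Set.mem_compl_iff, Set.mem_singleton_iff, Complex.ofReal_eq_zero]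
        positivity
    refine htend.frequently (Frequently.of_forall fun n => ?_)
    apply hz
    rw [abs_of_pos (by positivity)]
    have h1 : (1 : ℝ) / (n + 1) ≤ 1 := by
      rw [div_le_one (by positivity)]
      linarith [Nat.cast_nonneg (α := ℝ) n]
    nlinarith
  intro z hzb
  exact hh.eqOn_zero_of_preconnected_of_frequently_eq_zero hpre h0 hfreq hzb

/-- If a holomorphic function of two variables on a connected open neighborhood of the
origin vanishes on the totally real slice `{(z, z̄)}` near the origin, it vanishes
identically. -/
theorem vanishing_on_conjugate_diagonal (U : Set (ℂ × ℂ)) (hU : IsOpen U)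
    (hconn : IsConnected U) (h0 : ((0 : ℂ), (0 : ℂ)) ∈ U)
    (f : ℂ × ℂ → ℂ) (hf : AnalyticOnNhd ℂ f U)
    (hvan : ∃ ε : ℝ, 0 < ε ∧ ∀ z : ℂ, ‖z‖ < ε →
      (z, (starRingEnd ℂ) z) ∈ U ∧ f (z, (starRingEnd ℂ) z) = 0) :
    ∀ p ∈ U, f p = 0 := by
  obtain ⟨ε, hε, hvan⟩ := hvan
  obtain ⟨r, hr, hrU⟩ := Metric.isOpen_iff.1 hU _ h0
  set δ : ℝ := min ε r / 3 with hδdef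
  have hδ : 0 < δ := by positivity
  have hδε : 2 * δ < ε := by
    have := min_le_left ε r; rw [hδdef]; nlinarith
  have hδr : 2 * δ < r := by
    have := min_le_right ε r; rw [hδdef]; nlinarith
  set G : ℂ → ℂ → ℂ := fun u v => f (u + v * Complex.I, u - v * Complex.I) with hG
  -- membership of L(u,v) in U for small u, v
  have hmem : ∀ u v : ℂ, ‖u‖ < δ → ‖v‖ < δ → (u + v * Complex.I, u - v * Complex.I) ∈ U := by
    intro u v hu hv
    apply hrU
    rw [Metric.mem_ball, Prod.dist_eq]
    have h1 : ‖u + v * Complex.I‖ < r := by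
      calc ‖u + v * Complex.I‖ ≤ ‖u‖ + ‖v * Complex.I‖ := norm_add_le _ _
        _ = ‖u‖ + ‖v‖ := by simp
        _ < 2 * δ := by linarith
        _ < r := hδr
    have h2 : ‖u - v * Complex.I‖ < r := by
      calc ‖u - v * Complex.I‖ ≤ ‖u‖ + ‖v * Complex.I‖ := norm_sub_le _ _
        _ = ‖u‖ + ‖v‖ := by simp
        _ < 2 * δ := by linarith
        _ < r := hδr
    rw [dist_zero_right, dist_zero_right] at *
    exact max_lt h1 h2
  -- analyticity of slices
  have hanal1 : ∀ v : ℂ, ‖v‖ < δ → AnalyticOnNhd ℂ (fun u => G u v) (ball (0 : ℂ) δ) := by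
    intro v hv u hu
    rw [Metric.mem_ball, dist_zero_right] at hu
    have hin := hmem u v hu hv
    have hL : AnalyticAt ℂ (fun u : ℂ => (u + v * Complex.I, u - v * Complex.I)) u :=
      ((analyticAt_id.add analyticAt_const).prod (analyticAt_id.sub analyticAt_const))
    have hcomp : AnalyticAt ℂ (f ∘ fun u : ℂ => (u + v * Complex.I, u - v * Complex.I)) u :=
      AnalyticAt.comp_of_eq (hf _ hin) hL rfl
    simpa [Function.comp_def, hG] using hcomp
  have hanal2 : ∀ u : ℂ, ‖u‖ < δ → AnalyticOnNhd ℂ (fun v => G u v) (ball (0 : ℂ) δ) := by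
    intro u hu v hv
    rw [Metric.mem_ball, dist_zero_right] at hv
    have hin := hmem u v hu hv
    have hL : AnalyticAt ℂ (fun v : ℂ => (u + v * Complex.I, u - v * Complex.I)) v :=
      ((analyticAt_const.add (analyticAt_id.mul analyticAt_const)).prod
        (analyticAt_const.sub (analyticAt_id.mul analyticAt_const)))
    have hcomp : AnalyticAt ℂ (f ∘ fun v : ℂ => (u + v * Complex.I, u - v * Complex.I)) v :=
      AnalyticAt.comp_of_eq (hf _ hin) hL rfl
    simpa [Function.comp_def, hG] using hcomp
  -- Step A: for real y, G u y = 0 for all u in the ball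
  have stepA : ∀ y : ℝ, |y| < δ → ∀ u ∈ ball (0 : ℂ) δ, G u (y : ℂ) = 0 := by
    intro y hy
    refine aux_vanish_real hδ (hanal1 _ (by simpa using hy)) fun x hx => ?_
    have hzabs : ‖(x : ℂ) + (y : ℂ) * Complex.I‖ < ε := by
      calc ‖(x : ℂ) + (y : ℂ) * Complex.I‖
          ≤ ‖(x : ℂ)‖ + ‖(y : ℂ) * Complex.I‖ := norm_add_le _ _
        _ = |x| + |y| := by simp
        _ < 2 * δ := by linarith
        _ < ε := hδε
    have := (hvan _ hzabs).2
    have hconj : (starRingEnd ℂ) ((x : ℂ) + (y : ℂ) * Complex.I) =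
        (x : ℂ) - (y : ℂ) * Complex.I := by
      simp [map_add, map_mul, Complex.conj_I, Complex.conj_ofReal, sub_eq_add_neg, mul_comm]
    rw [hconj] at this
    simpa [hG] using this
  -- Step B: G u v = 0 for all u, v in the ball
  have stepB : ∀ u ∈ ball (0 : ℂ) δ, ∀ v ∈ ball (0 : ℂ) δ, G u v = 0 := by
    intro u hu
    rw [Metric.mem_ball, dist_zero_right] at hu
    refine aux_vanish_real hδ (hanal2 u hu) fun y hy => ?_
    exact stepA y hy u (by simpa [Metric.mem_ball, dist_zero_right] using hu)
  -- Step C: f vanishes on a ball around the origin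
  have stepC : ∀ p ∈ ball ((0 : ℂ), (0 : ℂ)) δ, f p = 0 := by
    rintro ⟨z₁, z₂⟩ hp
    rw [Metric.mem_ball, Prod.dist_eq] at hp
    have h1 : ‖z₁‖ < δ := by
      simpa [dist_eq_norm] using lt_of_le_of_lt (le_max_left _ _) hp
    have h2 : ‖z₂‖ < δ := by
      simpa [dist_eq_norm] using lt_of_le_of_lt (le_max_right _ _) hp
    set u : ℂ := (z₁ + z₂) / 2
    set v : ℂ := (z₁ - z₂) / (2 * Complex.I)
    have hu : ‖u‖ < δ := by
      calc ‖u‖ = ‖z₁ + z₂‖ / 2 := by simp [u, norm_div]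
        _ ≤ (‖z₁‖ + ‖z₂‖) / 2 := by
            have := norm_add_le z₁ z₂; linarith
        _ < δ := by linarith
    have hv : ‖v‖ < δ := by
      have h2I : ‖(2 * Complex.I : ℂ)‖ = 2 := by simp
      calc ‖v‖ = ‖z₁ - z₂‖ / 2 := by rw [norm_div, h2I]
        _ ≤ (‖z₁‖ + ‖z₂‖) / 2 := by
            have := norm_sub_le z₁ z₂; linarith
        _ < δ := by linarith
    have key := stepB u (by simpa [Metric.mem_ball, dist_zero_right] using hu)
      v (by simpa [Metric.mem_ball, dist_zero_right] using hv)
    have e1 : u + v * Complex.I = z₁ := by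
      have hI : Complex.I ≠ 0 := Complex.I_ne_zero
      simp only [u, v]
      field_simp
      ring
    have e2 : u - v * Complex.I = z₂ := by
      have hI : Complex.I ≠ 0 := Complex.I_ne_zero
      simp only [u, v]
      field_simp
      ring
    rw [hG] at key
    simp only at key
    rw [e1, e2] at key
    exact key
  -- Step D: identity theorem
  have hev : f =ᶠ[nhds ((0 : ℂ), (0 : ℂ))] 0 := by
    filter_upwards [Metric.ball_mem_nhds _ hδ] with p hp using stepC p hp
  exact fun p hp =>
    hf.eqOn_zero_of_preconnected_of_eventuallyEq_zero hconn.isPreconnected h0 hev hp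
end

section
/- Fix τ ∈ ℂ with t := Im τ > 0. For every z = x + y√−1 ∈ ℂ one has ∫₀¹ ∫₀¹ |θ_{a,b}(z)|² da db = (2t)^{−1/2} · exp(2π y²/t). -/
open MeasureTheory intervalIntegral

/-- The theta function with real characteristics `a, b`:
`θ_{a,b}(z) = exp(πi a² τ + 2πi a (z+b)) · θ(z + aτ + b)`,
where `θ(w) = Σₙ exp(πi n² τ + 2πi n w)` is `jacobiTheta₂ w τ`. -/
noncomputable def thetaChar (τ : ℂ) (a b : ℝ) (z : ℂ) : ℂ :=
  Complex.exp (Real.pi * Complex.I * (a : ℂ) ^ 2 * τ +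
      2 * Real.pi * Complex.I * (a : ℂ) * (z + (b : ℂ))) *
    jacobiTheta₂ (z + (a : ℂ) * τ + (b : ℂ)) τ

namespace ThetaAux
open Complex Real Set


noncomputable def cterm (τ z : ℂ) (a : ℝ) (n : ℤ) : ℂ :=
  Complex.exp (((π * ((n : ℝ) + a) ^ 2 : ℝ) : ℂ) * (I * τ) +
    ((2 * π * ((n : ℝ) + a) : ℝ) : ℂ) * (I * z))

noncomputable def bfac (a b : ℝ) (n : ℤ) : ℂ :=
  Complex.exp (((2 * π * ((n : ℝ) + a) * b : ℝ) : ℂ) * I)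

lemma hasSum_thetaChar (τ : ℂ) (ht : 0 < τ.im) (z : ℂ) (a b : ℝ) :
    HasSum (fun n : ℤ => cterm τ z a n * bfac a b n) (thetaChar τ a b z) := by
  have h := (hasSum_jacobiTheta₂_term (z + (a : ℂ) * τ + (b : ℂ)) ht).mul_left
    (Complex.exp (π * I * (a : ℂ) ^ 2 * τ + 2 * π * I * (a : ℂ) * (z + (b : ℂ))))
  have e : (fun n : ℤ => cterm τ z a n * bfac a b n)
      = fun n : ℤ => Complex.exp (π * I * (a : ℂ) ^ 2 * τ + 2 * π * I * (a : ℂ) * (z + (b : ℂ)))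
        * jacobiTheta₂_term n (z + (a : ℂ) * τ + (b : ℂ)) τ := by
    funext n
    rw [cterm, bfac, jacobiTheta₂_term, ← Complex.exp_add, ← Complex.exp_add]
    congr 1
    push_cast
    ring
  rw [thetaChar, e]
  exact h

lemma norm_cterm (τ z : ℂ) (a : ℝ) (n : ℤ) :
    ‖cterm τ z a n‖
      = rexp (-(π * ((n : ℝ) + a) ^ 2 * τ.im) - 2 * π * ((n : ℝ) + a) * z.im) := by
  rw [cterm, Complex.norm_exp]
  congr 1
  simp only [Complex.add_re, Complex.mul_re, Complex.mul_im, Complex.I_re, Complex.I_im,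
    Complex.ofReal_re, Complex.ofReal_im]
  ring

lemma abs_bfac (a b : ℝ) (n : ℤ) : ‖bfac a b n‖ = 1 :=
  Complex.norm_exp_ofReal_mul_I _

lemma summable_abs_cterm (τ : ℂ) (ht : 0 < τ.im) (z : ℂ) (a : ℝ) :
    Summable (fun n : ℤ => ‖cterm τ z a n‖) := by
  have h := (hasSum_thetaChar τ ht z a 0).summable
  have e : (fun n : ℤ => cterm τ z a n * bfac a 0 n) = fun n : ℤ => cterm τ z a n := by
    funext n
    rw [bfac]
    norm_num
  rw [e] at h
  exact h.norm


section
variable (τ z : ℂ) (a : ℝ)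


lemma key_rearrange (b : ℝ) (m n : ℤ) :
    (cterm τ z a m * bfac a b m) * (starRingEnd ℂ) (cterm τ z a n * bfac a b n)
      = (cterm τ z a m * (starRingEnd ℂ) (cterm τ z a n))
          * Complex.exp ((2 * π * ((m : ℂ) - n) * I) * (b : ℂ)) := by
  rw [map_mul, mul_mul_mul_comm]
  congr 1
  rw [bfac, bfac, ← Complex.exp_conj, ← Complex.exp_add]
  congr 1
  rw [map_mul, Complex.conj_ofReal, Complex.conj_I]
  push_cast
  ring

lemma norm_term (b : ℝ) (m n : ℤ) :
    ‖(cterm τ z a m * bfac a b m) * (starRingEnd ℂ) (cterm τ z a n * bfac a b n)‖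
      = ‖cterm τ z a m‖ * ‖cterm τ z a n‖ := by
  simp only [norm_mul, map_mul, abs_bfac, Complex.norm_conj, mul_one]

lemma integral_term (ht : 0 < τ.im) (m n : ℤ) :
    ∫ b in Ioc (0:ℝ) 1,
        (cterm τ z a m * bfac a b m) * (starRingEnd ℂ) (cterm τ z a n * bfac a b n)
      = if m = n then ((‖cterm τ z a m‖ ^ 2 : ℝ) : ℂ) else 0 := by
  simp only [key_rearrange]
  rcases eq_or_ne m n with rfl | hmn
  · rw [if_pos rfl]
    have : ∀ b : ℝ, (cterm τ z a m * (starRingEnd ℂ) (cterm τ z a m))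
        * Complex.exp ((2 * π * ((m : ℂ) - m) * I) * (b : ℂ))
        = ((‖cterm τ z a m‖ ^ 2 : ℝ) : ℂ) := by
      intro b
      rw [sub_self, mul_zero, zero_mul, zero_mul, Complex.exp_zero, mul_one,
        Complex.mul_conj]
      norm_cast
      exact (Complex.sq_norm _).symm
    simp only [this]
    rw [setIntegral_const]
    simp [Real.volume_Ioc]
  · rw [if_neg hmn, MeasureTheory.integral_const_mul]
    have hc : (2 * π * ((m : ℂ) - n) * I) ≠ 0 := by
      apply mul_ne_zero (mul_ne_zero (by norm_num [Real.pi_ne_zero]) _) Complex.I_ne_zero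
      rw [sub_ne_zero]
      exact_mod_cast fun h => hmn (by exact_mod_cast h)
    rw [← intervalIntegral.integral_of_le zero_le_one, integral_exp_mul_complex hc]
    rw [show (2 * π * ((m : ℂ) - n) * I) * ((1:ℝ):ℂ) = ((m - n : ℤ) : ℂ) * (2 * π * I) by
      push_cast; ring]
    rw [Complex.exp_int_mul_two_pi_mul_I]
    simp

lemma inner_integral (ht : 0 < τ.im) :
    ∫ b in (0:ℝ)..1, (‖thetaChar τ a b z‖) ^ 2
      = ∑' n : ℤ, rexp (-(2 * π * τ.im) * ((n : ℝ) + a) ^ 2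
          - 4 * π * z.im * ((n : ℝ) + a)) := by
  set d : ℤ → ℝ := fun n => ‖cterm τ z a n‖ with hd_def
  have hd : Summable d := summable_abs_cterm τ ht z a
  have hdnorm : Summable fun n : ℤ => ‖d n‖ := by
    exact hd.congr fun n => (Real.norm_of_nonneg (norm_nonneg (cterm τ z a n))).symm
  -- pointwise expansion
  have h1 : ∀ b : ℝ, ((‖thetaChar τ a b z‖ ^ 2 : ℝ) : ℂ)
      = ∑' p : ℤ × ℤ, (cterm τ z a p.1 * bfac a b p.1)
          * (starRingEnd ℂ) (cterm τ z a p.2 * bfac a b p.2) := by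
    intro b
    have hs := hasSum_thetaChar τ ht z a b
    have hs' : HasSum (fun n : ℤ => (starRingEnd ℂ) (cterm τ z a n * bfac a b n))
        ((starRingEnd ℂ) (thetaChar τ a b z)) := hs.map (starRingEnd ℂ) continuous_conj
    have habs : ((‖thetaChar τ a b z‖ ^ 2 : ℝ) : ℂ)
        = thetaChar τ a b z * (starRingEnd ℂ) (thetaChar τ a b z) := by
      rw [Complex.mul_conj]
      norm_cast
      exact Complex.sq_norm _
    rw [habs, ← hs'.tsum_eq, ← hs.tsum_eq]
    refine tsum_mul_tsum_of_summable_norm ?_ ?_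
    · simpa only [norm_mul, map_mul, abs_bfac, mul_one] using hd
    · simpa only [norm_mul, map_mul, abs_bfac, Complex.norm_conj, mul_one] using hd
  -- summability of the (m,n)-norms
  have hsum2 : Summable fun p : ℤ × ℤ => d p.1 * d p.2 := by
    have := summable_mul_of_summable_norm (f := d) (g := d) hdnorm hdnorm
    exact this
  -- move to ℂ and integrate over Ioc 0 1
  have h2 : ((∫ b in (0:ℝ)..1, (‖thetaChar τ a b z‖) ^ 2 : ℝ) : ℂ)
      = ∑' p : ℤ × ℤ, ∫ b in Ioc (0:ℝ) 1,
          (cterm τ z a p.1 * bfac a b p.1)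
            * (starRingEnd ℂ) (cterm τ z a p.2 * bfac a b p.2) := by
    have hco : ((∫ b in Ioc (0:ℝ) 1, ‖thetaChar τ a b z‖ ^ 2 : ℝ) : ℂ)
        = ∫ b in Ioc (0:ℝ) 1, ((‖thetaChar τ a b z‖ ^ 2 : ℝ) : ℂ) :=
      _root_.integral_ofReal.symm
    rw [intervalIntegral.integral_of_le zero_le_one, hco]
    simp only [h1]
    refine (integral_tsum_of_summable_integral_norm ?_ ?_).symm
    · rintro ⟨m, n⟩
      apply Continuous.integrableOn_Ioc
      simp only [key_rearrange]
      fun_prop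
    · apply hsum2.congr
      rintro ⟨m, n⟩
      have : ∀ b : ℝ, ‖(cterm τ z a m * bfac a b m)
          * (starRingEnd ℂ) (cterm τ z a n * bfac a b n)‖ = d m * d n :=
        fun b => norm_term τ z a b m n
      simp only [this]
      rw [setIntegral_const]
      simp [Real.volume_Ioc]
  -- evaluate
  rw [← Complex.ofReal_inj]
  rw [h2]
  simp only [integral_term τ z a ht]
  -- diagonal sum
  have h3 : ∑' p : ℤ × ℤ, (if p.1 = p.2 then ((d p.1 ^ 2 : ℝ) : ℂ) else 0)
      = ∑' n : ℤ, ((d n ^ 2 : ℝ) : ℂ) := by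
    refine (Function.Injective.tsum_eq (f := fun p : ℤ × ℤ =>
        if p.1 = p.2 then ((d p.1 ^ 2 : ℝ) : ℂ) else 0)
        (fun m n hmn => ?_) (g := fun n : ℤ => (n, n)) ?_).symm.trans ?_
    · simpa using congrArg Prod.fst hmn
    · rintro ⟨m, n⟩ hp
      simp only [Function.mem_support, ne_eq, ite_eq_right_iff, not_forall] at hp
      obtain ⟨rfl, -⟩ := hp
      exact ⟨m, rfl⟩
    · apply tsum_congr
      intro n
      simp
  rw [h3, ← Complex.ofReal_tsum]
  norm_cast
  apply tsum_congr
  intro n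
  rw [hd_def]
  simp only
  rw [norm_cterm, ← Real.exp_nat_mul]
  congr 1
  push_cast
  ring

end
end ThetaAux

open Complex Real Set ThetaAux in
/-- `∫₀¹∫₀¹ |θ_{a,b}(z)|² da db = (2t)^{-1/2} exp(2π y²/t)`, `t = Im τ`, `y = Im z`. -/
theorem integral_theta_char_sq (τ : ℂ) (ht : 0 < τ.im) (z : ℂ) :
    (∫ a in (0 : ℝ)..1, ∫ b in (0 : ℝ)..1, ‖thetaChar τ a b z‖ ^ 2)
      = (1 / Real.sqrt (2 * τ.im)) * Real.exp (2 * Real.pi * z.im ^ 2 / τ.im) := by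
  set t : ℝ := τ.im with htdef
  set y : ℝ := z.im with hydef
  have ht0 : (0:ℝ) < 2 * π * t := by positivity
  set H : ℝ → ℝ := fun u => rexp (2 * π * y ^ 2 / t) * rexp (-(2 * π * t) * (u + y / t) ^ 2)
    with hHdef
  have hH : ∀ u : ℝ, H u = rexp (-(2 * π * t) * u ^ 2 - 4 * π * y * u) := by
    intro u
    simp only [hHdef, ← Real.exp_add]
    congr 1
    field_simp
    ring
  have hHcont : Continuous H := by fun_prop
  have hHpos : ∀ u : ℝ, 0 < H u := fun u => mul_pos (Real.exp_pos _) (Real.exp_pos _)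
  have hHint : Integrable H := by
    rw [hHdef]
    exact ((integrable_exp_neg_mul_sq ht0).comp_add_right (y / t)).const_mul _
  -- translation of the unit-interval integrals
  have hIoc : ∀ n : ℤ, (∫ a in Ioc (0:ℝ) 1, H ((n:ℝ) + a))
      = ∫ u in Ioc ((n:ℝ)) ((n:ℝ) + 1), H u := by
    intro n
    rw [← intervalIntegral.integral_of_le zero_le_one,
      intervalIntegral.integral_comp_add_left H ((n:ℝ)),
      intervalIntegral.integral_of_le (by linarith : (n:ℝ) + 0 ≤ (n:ℝ) + 1)]
    norm_num
  -- sum over ℤ of the translated integrals gives the full integral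
  have hasSumInt : HasSum (fun n : ℤ => ∫ u in Ioc ((n:ℝ)) ((n:ℝ) + 1), H u) (∫ u, H u) := by
    have hdisj : Pairwise (Function.onFun Disjoint fun n : ℤ => Ioc ((n:ℝ)) ((n:ℝ) + 1)) := by
      simpa using pairwise_disjoint_Ioc_add_intCast (0 : ℝ)
    have hU : ⋃ n : ℤ, Ioc ((n:ℝ)) ((n:ℝ) + 1) = univ := iUnion_Ioc_intCast ℝ
    have h := hasSum_integral_iUnion (μ := volume) (f := H)
      (fun n : ℤ => measurableSet_Ioc) hdisj (by rw [hU]; exact hHint.integrableOn)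
    rwa [hU, MeasureTheory.setIntegral_univ] at h
  -- rewrite inner integral and swap sum/integral
  have hB : ∀ a : ℝ, (∫ b in (0:ℝ)..1, ‖thetaChar τ a b z‖ ^ 2)
      = ∑' n : ℤ, H ((n:ℝ) + a) := by
    intro a
    rw [inner_integral τ z a ht]
    exact tsum_congr fun n => (hH _).symm
  have hnorm : ∀ (n : ℤ) (a : ℝ), ‖H ((n:ℝ) + a)‖ = H ((n:ℝ) + a) :=
    fun n a => Real.norm_of_nonneg (hHpos _).le
  have hswap : (∫ a in Ioc (0:ℝ) 1, ∑' n : ℤ, H ((n:ℝ) + a))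
      = ∑' n : ℤ, ∫ a in Ioc (0:ℝ) 1, H ((n:ℝ) + a) := by
    refine (integral_tsum_of_summable_integral_norm ?_ ?_).symm
    · exact fun n => (hHcont.comp (by fun_prop)).integrableOn_Ioc
    · apply hasSumInt.summable.congr
      intro n
      rw [← hIoc n]
      refine setIntegral_congr_fun measurableSet_Ioc fun a _ => (hnorm n a).symm
  -- the Gaussian integral
  have hgauss : (∫ u, H u) = (1 / Real.sqrt (2 * t)) * rexp (2 * π * y ^ 2 / t) := by
    rw [hHdef]
    rw [MeasureTheory.integral_const_mul]
    rw [integral_add_right_eq_self (fun u => rexp (-(2 * π * t) * u ^ 2)) (y / t)]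
    rw [integral_gaussian]
    rw [show π / (2 * π * t) = 1 / (2 * t) by
      field_simp]
    rw [one_div, Real.sqrt_inv, mul_comm, one_div]
  calc (∫ a in (0 : ℝ)..1, ∫ b in (0 : ℝ)..1, ‖thetaChar τ a b z‖ ^ 2)
      = ∫ a in Ioc (0:ℝ) 1, ∑' n : ℤ, H ((n:ℝ) + a) := by
        rw [intervalIntegral.integral_of_le zero_le_one]
        exact setIntegral_congr_fun measurableSet_Ioc fun a _ => hB a
    _ = ∑' n : ℤ, ∫ a in Ioc (0:ℝ) 1, H ((n:ℝ) + a) := hswap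
    _ = ∑' n : ℤ, ∫ u in Ioc ((n:ℝ)) ((n:ℝ) + 1), H u := tsum_congr hIoc
    _ = ∫ u, H u := hasSumInt.tsum_eq
    _ = (1 / Real.sqrt (2 * τ.im)) * Real.exp (2 * Real.pi * z.im ^ 2 / τ.im) := hgauss
end

section
/- Let f : ℂ → ℂ be analytic on the closed ball {|z| ≤ 1} with f(0) = 0 and |f′(z)| ≤ 1 + |f(z)|² for all |z| ≤ 1, and suppose 1 − ε ≤ |f′(0)| with ε := 10⁻¹⁰⁰. Then |f″(0)| ≤ 30·√ε. (Equivalently, the second Taylor coefficient a₂ = f″(0)/2 satisfies 2|a₂| ≤ 30√ε.) -/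
open Metric Complex Set

/-- If `f` is analytic on the closed unit ball with `f(0) = 0`, spherical derivative at most
one, and `|f′(0)| ≥ 1 - ε` with `ε = 10⁻¹⁰⁰`, then `|f″(0)| ≤ 30 √ε`. -/
theorem second_deriv_estimate (f : ℂ → ℂ)
    (hf : AnalyticOnNhd ℂ f (Metric.closedBall (0 : ℂ) 1))
    (hf0 : f 0 = 0)
    (hderiv : ∀ z : ℂ, ‖z‖ ≤ 1 →
      ‖deriv f z‖ ≤ 1 + ‖f z‖ ^ 2)
    (hlow : 1 - 10 ^ (-100 : ℤ) ≤ ‖deriv f 0‖) :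
    ‖iteratedDeriv 2 f 0‖ ≤ 30 * Real.sqrt (10 ^ (-100 : ℤ)) := by
  obtain ⟨r, hrdef⟩ : ∃ r : ℝ, r = (10:ℝ)^(-50:ℤ) := ⟨_, rfl⟩
  have hrpos : 0 < r := by rw [hrdef]; positivity
  have hrhalf : r ≤ 1/2 := by
    rw [hrdef, zpow_neg, show ((50:ℤ)) = ((50:ℕ):ℤ) by norm_num, zpow_natCast]
    rw [inv_le_comm₀ (by positivity) (by norm_num)]
    norm_num
  have hr1 : r ≤ 1 := hrhalf.trans (by norm_num)
  have hr2le : r^2 ≤ 1/4 := by nlinarith [mul_nonneg (by linarith : (0:ℝ) ≤ 1/2 - r) (by linarith : (0:ℝ) ≤ 1/2 + r)]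
  have hepsr : ((10:ℝ)^(-100:ℤ)) = r^2 := by
    rw [hrdef, ← zpow_natCast ((10:ℝ)^(-50:ℤ)) 2, ← zpow_mul]; norm_num
  have hsqrt : Real.sqrt ((10:ℝ) ^ (-100 : ℤ)) = r := by
    rw [hepsr]; exact Real.sqrt_sq hrpos.le
  have hmem : ∀ z : ℂ, ‖z‖ ≤ 1 → z ∈ Metric.closedBall (0:ℂ) 1 := by
    intro z hz
    simpa [Metric.mem_closedBall, Complex.dist_eq] using hz
  -- Step A: |f w| ≤ 2 r for |w| ≤ r
  have stepA : ∀ w : ℂ, ‖w‖ ≤ r → ‖f w‖ ≤ 2 * r := by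
    intro w hw
    have hφd : ∀ s ∈ Icc (0:ℝ) 1, HasDerivAt (fun s : ℝ => f ((s:ℂ) * w))
        (deriv f ((s:ℂ) * w) * w) s := by
      intro s hs
      have habs : ‖(s:ℂ) * w‖ ≤ 1 := by
        rw [norm_mul]
        calc ‖(s:ℂ)‖ * ‖w‖ ≤ 1 * r := by
              apply mul_le_mul _ hw (norm_nonneg w) zero_le_one
              rw [Complex.norm_real, Real.norm_eq_abs]; rw [abs_le]; constructor <;> linarith [hs.1, hs.2]
          _ ≤ 1 := by simpa using hr1
      have h1 : HasDerivAt f (deriv f ((s:ℂ) * w)) ((s:ℂ) * w) :=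
        ((hf _ (hmem _ habs)).differentiableAt).hasDerivAt
      have h2 : HasDerivAt (fun ζ : ℂ => ζ * w) w (s:ℂ) := by
        simpa using (hasDerivAt_id (s:ℂ)).mul_const w
      exact (h1.comp (s:ℂ) h2).comp_ofReal
    have key := image_norm_le_of_norm_deriv_right_lt_deriv_boundary
      (f := fun s : ℝ => f ((s:ℂ) * w)) (a := 0) (b := 1)
      (f' := fun s : ℝ => deriv f ((s:ℂ) * w) * w)
      (fun s hs => ((hφd s hs).continuousAt).continuousWithinAt)
      (fun s hs => (hφd s (Ico_subset_Icc_self hs)).hasDerivWithinAt)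
      (B := fun s => 2 * r * s) (B' := fun _ => 2 * r)
      (by simp [hf0])
      (fun x => by simpa using (hasDerivAt_id x).const_mul (2*r))
      ?_ (Set.right_mem_Icc.mpr zero_le_one)
    · simpa using key
    · intro x hx hEq
      have hx0 := hx.1
      have hx1 := hx.2
      have habs : ‖(x:ℂ) * w‖ ≤ 1 := by
        rw [norm_mul]
        calc ‖(x:ℂ)‖ * ‖w‖ ≤ 1 * r := by
              apply mul_le_mul _ hw (norm_nonneg w) zero_le_one
              rw [Complex.norm_real, Real.norm_eq_abs, abs_le]; constructor <;> linarith
          _ ≤ 1 := by simpa using hr1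
      have hd := hderiv _ habs
      have hfx : ‖f ((x:ℂ) * w)‖ = 2 * r * x := by
        simpa using hEq
      rw [norm_mul]
      calc ‖deriv f ((x:ℂ)*w)‖ * ‖w‖
          ≤ (1 + (2*r*x)^2) * r := by
            apply mul_le_mul _ hw (norm_nonneg w) (by positivity)
            rw [← hfx]; exact hd
        _ < 2 * r := by
            have hx2 : x^2 < 1 := by nlinarith
            have h42 : r^2*x^2 ≤ (1/4)*x^2 := mul_le_mul_of_nonneg_right hr2le (sq_nonneg x)
            have h43 : r^2*x^2 < 1/4 := lt_of_le_of_lt h42 (by linarith)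
            have h44 := mul_lt_mul_of_pos_left h43 (show (0:ℝ) < 4*r by linarith)
            nlinarith [h44]
  -- Step B: |f'(z)| ≤ 1 + 4 r² for |z| ≤ r
  have stepB : ∀ z : ℂ, ‖z‖ ≤ r → ‖deriv f z‖ ≤ 1 + 4*r^2 := by
    intro z hz
    have := hderiv z (hz.trans hr1)
    have := stepA z hz
    nlinarith [norm_nonneg (f z)]
  -- setup for Schwarz
  have hg : AnalyticOnNhd ℂ (deriv f) (Metric.closedBall (0:ℂ) 1) := hf.deriv
  set a0 : ℂ := deriv f 0 with ha0def
  have ha0le : ‖a0‖ ≤ 1 := by simpa [hf0] using hderiv 0 (by simp)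
  have ha0pos : 0 < ‖a0‖ := by
    have : (0:ℝ) < 1 - 10^(-100:ℤ) := by rw [hepsr]; linarith [hr2le]
    linarith
  have ha0ne : a0 ≠ 0 := by
    intro h; rw [h] at ha0pos; simp at ha0pos
  set c : ℂ := (starRingEnd ℂ) a0 / ((‖a0‖ : ℝ) : ℂ) with hcdef
  have hcabs : ‖c‖ = 1 := by
    rw [hcdef, norm_div, Complex.norm_conj, Complex.norm_real, norm_norm, div_self ha0pos.ne']
  have hca0 : c * a0 = ((‖a0‖ : ℝ) : ℂ) := by
    rw [hcdef, div_mul_eq_mul_div, mul_comm, Complex.mul_conj]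
    rw [Complex.normSq_eq_norm_sq]
    have : ((‖a0‖ : ℝ) : ℂ) ≠ 0 := by
      simpa using ha0pos.ne'
    field_simp
    push_cast
    ring
  set K : ℝ := 1 + 5*r^2 with hKdef
  set F : ℂ → ℂ := fun z => (K:ℂ) - c * deriv f z with hFdef
  set F0 : ℝ := K - ‖a0‖ with hF0def
  have hF0pos : 0 < F0 := by rw [hF0def, hKdef]; nlinarith
  have hF0' : F 0 = (F0:ℂ) := by
    rw [hFdef]; simp only [← ha0def, hca0, hF0def]; push_cast; ring
  have hReF : ∀ z : ℂ, ‖z‖ ≤ r → r^2 ≤ (F z).re := by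
    intro z hz
    have h1 : (c * deriv f z).re ≤ ‖c * deriv f z‖ := Complex.re_le_norm _
    have h2 : ‖c * deriv f z‖ ≤ 1 + 4*r^2 := by
      rw [norm_mul, hcabs, one_mul]; exact stepB z hz
    have : (F z).re = K - (c * deriv f z).re := by
      rw [hFdef]; simp [Complex.sub_re, Complex.ofReal_re]
    rw [this, hKdef]; linarith
  have hden : ∀ z : ℂ, ‖z‖ ≤ r → F z + (F0:ℂ) ≠ 0 := by
    intro z hz h
    have : (F z + (F0:ℂ)).re = 0 := by rw [h]; simp
    rw [Complex.add_re, Complex.ofReal_re] at this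
    have := hReF z hz
    nlinarith
  set G : ℂ → ℂ := fun z => (F z - (F0:ℂ)) / (F z + (F0:ℂ)) with hGdef
  have hG0 : G 0 = 0 := by rw [hGdef]; simp [hF0']
  have hGlt : ∀ z : ℂ, ‖z‖ ≤ r → ‖G z‖ < 1 := by
    intro z hz
    have hre := hReF z hz
    have hd := hden z hz
    rw [hGdef]
    simp only [norm_div]
    rw [div_lt_one (norm_pos_iff.mpr hd)]
    rw [Complex.norm_def, Complex.norm_def]
    apply Real.sqrt_lt_sqrt (Complex.normSq_nonneg _)
    simp only [Complex.normSq_apply, Complex.sub_re, Complex.sub_im, Complex.add_re,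
      Complex.add_im, Complex.ofReal_re, Complex.ofReal_im]
    nlinarith [hF0pos, hre]
  -- differentiability of G on the ball
  have hsub : ∀ z : ℂ, z ∈ ball (0:ℂ) r → ‖z‖ ≤ r := by
    intro z hz
    rw [mem_ball, Complex.dist_eq, sub_zero] at hz
    exact hz.le
  have hFdiff : DifferentiableOn ℂ F (ball (0:ℂ) r) := by
    intro z hz
    have hz1 : z ∈ Metric.closedBall (0:ℂ) 1 := hmem z ((hsub z hz).trans hr1)
    exact (((hg z hz1).differentiableAt.const_mul c).const_sub (K:ℂ)).differentiableWithinAt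
  have hGdiff : DifferentiableOn ℂ G (ball (0:ℂ) r) := by
    rw [hGdef]
    exact (hFdiff.sub_const _).div (hFdiff.add_const _) (fun z hz => hden z (hsub z hz))
  have hmaps : Set.MapsTo G (ball (0:ℂ) r) (closedBall (G 0) 1) := by
    intro z hz
    rw [hG0, mem_closedBall, Complex.dist_eq, sub_zero]
    exact (hGlt z (hsub z hz)).le
  have schwarz : ‖deriv G 0‖ ≤ 1 / r :=
    Complex.norm_deriv_le_div_of_mapsTo_ball hGdiff hmaps hrpos
  -- compute deriv G 0
  set D : ℂ := deriv (deriv f) 0 with hDdef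
  have hgd : HasDerivAt (deriv f) D 0 :=
    ((hg 0 (by simp)).differentiableAt).hasDerivAt
  have hFd : HasDerivAt F (-(c * D)) 0 := by
    rw [hFdef]
    exact (hgd.const_mul c).const_sub (K:ℂ)
  have hv0 : F 0 + (F0:ℂ) ≠ 0 := hden 0 (by simp [hrpos.le])
  have hGd : HasDerivAt G
      ((-(c*D) * (F 0 + (F0:ℂ)) - (F 0 - (F0:ℂ)) * (-(c*D))) / (F 0 + (F0:ℂ))^2) 0 := by
    rw [hGdef]
    exact (hFd.sub_const _).div (hFd.add_const _) hv0
  have hF0ne : ((F0:ℝ):ℂ) ≠ 0 := by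
    simpa using hF0pos.ne'
  have hderivG : deriv G 0 = -(c * D) / (2*(F0:ℂ)) := by
    rw [hGd.deriv, hF0']
    rw [show ((F0:ℂ) + (F0:ℂ)) = 2*(F0:ℂ) by ring]
    rw [show ((F0:ℂ) - (F0:ℂ)) = 0 by ring]
    field_simp
    ring
  have habsG : ‖deriv G 0‖ = ‖D‖ / (2*F0) := by
    rw [hderivG, norm_div, norm_neg, norm_mul, hcabs, one_mul]
    congr 1
    rw [show ((2:ℂ)*(F0:ℂ)) = ((2*F0 : ℝ):ℂ) by push_cast; ring, Complex.norm_real, Real.norm_eq_abs]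
    exact abs_of_pos (by linarith)
  rw [habsG] at schwarz
  rw [div_le_div_iff₀ (by linarith) hrpos] at schwarz
  have hF0le : F0 ≤ 6 * r^2 := by
    rw [hF0def, hKdef]
    have : 1 - r^2 ≤ ‖a0‖ := by rw [← hepsr]; exact hlow
    linarith
  have hDle : ‖D‖ ≤ 30 * r := by
    have h1 : ‖D‖ * r ≤ 12 * r^2 := by linarith [schwarz, hF0le]
    have h2 : ‖D‖ * r ≤ (30*r) * r := by nlinarith [h1, sq_nonneg r]
    exact le_of_mul_le_mul_right h2 hrpos
  rw [show (2:ℕ) = 1+1 from rfl, iteratedDeriv_succ, iteratedDeriv_one, hsqrt]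
  exact hDle
end

section
/- Let f : ℂ → ℂ be analytic on the closed ball {|z| ≤ 1} with f(0) = 0 and |f′(z)| ≤ 1 + |f(z)|² for all |z| ≤ 1, and suppose 1 − ε ≤ |f′(0)| with ε := 10⁻¹⁰⁰; set r₀ := 10⁻¹⁰. Then for every α ∈ ℝ, the average of |df|² := |f′|²/(1+|f|²)² over the circular sector D = {r e^{iθ} : 0 ≤ r ≤ r₀, α ≤ θ ≤ α + π/2} satisfies (4/(π r₀²)) · ∫_α^{α+π/2} ∫_0^{r₀} (|f′(re^{iθ})|²/(1 + |f(re^{iθ})|²)²) · r dr dθ ≤ 1 − (1/4)·r₀² + √ε < 1 − 10⁻³⁰. -/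
open Metric Set Filter intervalIntegral
open scoped Topology


lemma sector_growth (f : ℂ → ℂ)
    (hf : AnalyticOnNhd ℂ f (Metric.closedBall (0 : ℂ) 1))
    (hf0 : f 0 = 0)
    (hderiv : ∀ z : ℂ, ‖z‖ ≤ 1 →
      ‖deriv f z‖ ≤ 1 + ‖f z‖ ^ 2) :
    ∀ z : ℂ, ‖z‖ ≤ 1/4 → ‖f z‖ ≤ 2 * ‖z‖ := by
  intro z hz
  -- continuity of s ↦ f(s z)
  have hmem : ∀ s : ℝ, s ∈ Icc (0:ℝ) 1 → ((s:ℂ) * z) ∈ Metric.closedBall (0:ℂ) 1 := by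
    intro s hs
    simp only [Metric.mem_closedBall, dist_zero_right, norm_mul, Complex.norm_real,
      Real.norm_eq_abs, abs_of_nonneg hs.1]
    nlinarith [hs.1, hs.2, norm_nonneg z]
  have hcont : ∀ s : ℝ, s ∈ Icc (0:ℝ) 1 → ContinuousAt (fun t : ℝ => ‖f ((t:ℂ) * z)‖) s := by
    intro s hs
    have h1 : ContinuousAt f ((s:ℂ) * z) := (hf _ (hmem s hs)).continuousAt
    have h2 : ContinuousAt (fun t : ℝ => (t:ℂ) * z) s :=
      (Complex.continuous_ofReal.mul continuous_const).continuousAt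
    have h3 : ContinuousAt (fun t : ℝ => f ((t:ℂ) * z)) s := ContinuousAt.comp h1 h2
    exact h3.norm
  -- MVT style bound
  have hMVT : ∀ T : ℝ, 0 ≤ T → T ≤ 1 → (∀ s ∈ Icc (0:ℝ) T, ‖f ((s:ℂ) * z)‖ ≤ 3/4) →
      ∀ s ∈ Icc (0:ℝ) T, ‖f ((s:ℂ) * z)‖ ≤ 2 * s * ‖z‖ := by
    intro T hT0 hT1 hbd s hs
    have hder : ∀ x ∈ Icc (0:ℝ) T,
        HasDerivWithinAt (fun t : ℝ => f ((t:ℂ) * z)) (z * deriv f ((x:ℂ) * z)) (Icc 0 T) x := by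
      intro x hx
      have hx1 : ((x:ℂ) * z) ∈ Metric.closedBall (0:ℂ) 1 :=
        hmem x ⟨hx.1, hx.2.trans hT1⟩
      have hfd : HasDerivAt f (deriv f ((x:ℂ)*z)) ((x:ℂ)*z) :=
        ((hf _ hx1).differentiableAt).hasDerivAt
      have hψ : HasDerivAt (fun t : ℝ => (t:ℂ) * z) z x := by
        simpa using (hasDerivAt_id x).ofReal_comp.mul_const z
      have := HasDerivAt.scomp (𝕜 := ℝ) (𝕜' := ℂ) x hfd hψ
      simpa [smul_eq_mul, mul_comm, Function.comp_def] using this.hasDerivWithinAt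
    have hbound : ∀ x ∈ Icc (0:ℝ) T, ‖z * deriv f ((x:ℂ) * z)‖ ≤ 2 * ‖z‖ := by
      intro x hx
      have hx1 : ‖(x:ℂ) * z‖ ≤ 1 := by
        simpa [Metric.mem_closedBall, dist_zero_right] using
          hmem x ⟨hx.1, hx.2.trans hT1⟩
      have h2 := hderiv _ hx1
      have h3 := hbd x hx
      rw [norm_mul]
      have : ‖deriv f ((x:ℂ)*z)‖ ≤ 2 := by
        have : ‖f ((x:ℂ)*z)‖ ≤ 3/4 := by exact h3
        nlinarith [norm_nonneg (f ((x:ℂ)*z))]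
      nlinarith [norm_nonneg z]
    have key := (convex_Icc (0:ℝ) T).norm_image_sub_le_of_norm_hasDerivWithin_le
      hder hbound (left_mem_Icc.2 hT0) hs
    simp only [Complex.ofReal_zero, zero_mul, hf0, sub_zero] at key
    calc ‖f ((s:ℂ) * z)‖ ≤ 2 * ‖z‖ * ‖s‖ := key
    _ = 2 * s * ‖z‖ := by
        rw [Real.norm_eq_abs, abs_of_nonneg hs.1]; ring
  -- the set K
  set g : ℝ → ℝ := fun t => ‖f ((t:ℂ) * z)‖ with hg
  set K : Set ℝ := {t | t ∈ Icc (0:ℝ) 1 ∧ ∀ s ∈ Icc (0:ℝ) t, g s ≤ 3/4} with hK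
  have h0K : (0:ℝ) ∈ K := by
    refine ⟨by simp, fun s hs => ?_⟩
    have : s = 0 := le_antisymm hs.2 hs.1
    simp [this, g, hf0]; norm_num
  have hKne : K.Nonempty := ⟨0, h0K⟩
  have hbddK : BddAbove K := ⟨1, fun t ht => ht.1.2⟩
  set t₀ := sSup K with ht₀
  have ht₀0 : 0 ≤ t₀ := le_csSup hbddK h0K
  have ht₀1 : t₀ ≤ 1 := csSup_le hKne fun t ht => ht.1.2
  have ht₀K : ∀ s ∈ Icc (0:ℝ) t₀, g s ≤ 3/4 := by
    intro s hs
    rcases lt_or_eq_of_le hs.2 with hlt | heq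
    · obtain ⟨t, htK, hst⟩ := exists_lt_of_lt_csSup hKne hlt
      exact htK.2 s ⟨hs.1, hst.le⟩
    · rcases eq_or_lt_of_le hs.1 with h0 | h0
      · rw [← h0]
        show ‖f (((0:ℝ):ℂ) * z)‖ ≤ 3/4
        norm_num [hf0]
      · rw [heq] at h0 ⊢
        have hct : ContinuousWithinAt g (Iio t₀) t₀ :=
          ((hcont t₀ ⟨ht₀0, ht₀1⟩).continuousWithinAt)
        refine le_of_tendsto hct ?_
        filter_upwards [Ioo_mem_nhdsLT_of_mem (⟨h0, le_rfl⟩ : t₀ ∈ Ioc 0 t₀)] with u hu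
        obtain ⟨t, htK, hut⟩ := exists_lt_of_lt_csSup hKne hu.2
        exact htK.2 u ⟨hu.1.le, hut.le⟩
  -- t₀ = 1
  have ht₀eq : t₀ = 1 := by
    by_contra hne
    have hlt : t₀ < 1 := lt_of_le_of_ne ht₀1 hne
    have hgt₀ : g t₀ ≤ 1/2 := by
      have := hMVT t₀ ht₀0 ht₀1 ht₀K t₀ ⟨ht₀0, le_rfl⟩
      have h2 : 2 * t₀ * ‖z‖ ≤ 1/2 := by nlinarith [norm_nonneg z]
      exact le_trans this h2
    have hc : ContinuousAt g t₀ := hcont t₀ ⟨ht₀0, ht₀1⟩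
    have ev : ∀ᶠ u in 𝓝 t₀, g u ∈ Iio (3/4 : ℝ) :=
      hc.preimage_mem_nhds (Iio_mem_nhds (by linarith))
    rcases Metric.eventually_nhds_iff.1 ev with ⟨δ, hδ, hball⟩
    set t₁ := min 1 (t₀ + δ/2) with ht₁
    have ht₁K : t₁ ∈ K := by
      constructor
      · exact ⟨le_min (by norm_num) (by linarith), min_le_left _ _⟩
      · intro s hs
        rcases le_or_gt s t₀ with hle | hgt
        · exact ht₀K s ⟨hs.1, hle⟩
        · apply le_of_lt
          apply hball
          have hs2 : s ≤ t₀ + δ/2 := le_trans hs.2 (min_le_right _ _)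
          rw [Real.dist_eq, abs_of_pos (by linarith)]
          linarith
    have : t₁ ≤ t₀ := le_csSup hbddK ht₁K
    have : t₀ < t₁ := lt_min hlt (by linarith)
    linarith
  have final := hMVT 1 (by norm_num) le_rfl (by rw [← ht₀eq]; exact ht₀K) 1 ⟨by norm_num, le_rfl⟩
  simpa using final

lemma dstep (g : ℂ → ℂ) (M : ℝ) (hg : DifferentiableOn ℂ g (Metric.ball 0 (1/4)))
    (hM : ∀ z ∈ Metric.ball (0:ℂ) (1/4), ‖g z - g 0‖ < M) :
    DifferentiableOn ℂ (dslope g 0) (Metric.ball 0 (1/4)) ∧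
    (∀ z ∈ Metric.ball (0:ℂ) (1/4), ‖dslope g 0 z‖ ≤ 4 * M) ∧
    (∀ z : ℂ, g z = g 0 + z * dslope g 0 z) := by
  have hnb : Metric.ball (0:ℂ) (1/4) ∈ 𝓝 0 := Metric.ball_mem_nhds 0 (by norm_num)
  have hd : DifferentiableOn ℂ (dslope g 0) (Metric.ball 0 (1/4)) :=
    (Complex.differentiableOn_dslope hnb).mpr hg
  have maps : Set.MapsTo g (Metric.ball 0 (1/4)) (Metric.ball (g 0) M) := fun z hz => by
    rw [Metric.mem_ball, dist_eq_norm]; exact hM z hz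
  refine ⟨hd, fun z hz => ?_, fun z => ?_⟩
  · have h := Complex.norm_dslope_le_div_of_mapsTo_ball hg (maps.mono_right Metric.ball_subset_closedBall) hz
    calc ‖dslope g 0 z‖ ≤ M / (1/4) := h
    _ = 4 * M := by ring
  · rcases eq_or_ne z 0 with rfl | hz0
    · simp
    · rw [dslope_of_ne _ hz0, slope_def_module, smul_eq_mul]
      field_simp
      ring

lemma sector_expansion (f : ℂ → ℂ)
    (hf : AnalyticOnNhd ℂ f (Metric.closedBall (0 : ℂ) 1))
    (hf0 : f 0 = 0)
    (hderiv : ∀ z : ℂ, ‖z‖ ≤ 1 →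
      ‖deriv f z‖ ≤ 1 + ‖f z‖ ^ 2)
    (hgrow : ∀ z : ℂ, ‖z‖ ≤ 1/4 → ‖f z‖ ≤ 2 * ‖z‖) :
    ∃ b₁ b₂ : ℂ, ‖b₁‖ ≤ 12 ∧ ‖b₂‖ ≤ 100 ∧
      (∀ z ∈ Metric.ball (0:ℂ) (1/4), ‖f z - deriv f 0 * z‖ ≤ 30 * ‖z‖^2) ∧
      (∀ z ∈ Metric.ball (0:ℂ) (1/4), ‖deriv f z - (deriv f 0 + b₁*z + b₂*z^2)‖ ≤ 804 * ‖z‖^3) := by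
  have hsub : Metric.ball (0:ℂ) (1/4) ⊆ Metric.closedBall (0:ℂ) 1 := by
    apply Metric.ball_subset_closedBall.trans
    exact Metric.closedBall_subset_closedBall (by norm_num)
  have hdf : DifferentiableOn ℂ f (Metric.ball 0 (1/4)) :=
    fun z hz => ((hf z (hsub hz)).differentiableAt).differentiableWithinAt
  have hb₀ : ‖deriv f 0‖ ≤ 1 := by
    have := hderiv 0 (by norm_num)
    rw [hf0] at this
    simpa using this
  have hzn : ∀ z ∈ Metric.ball (0:ℂ) (1/4), ‖z‖ < 1/4 := by
    intro z hz; simpa [dist_zero_right] using hz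
  -- tower for f
  obtain ⟨hg1d, hg1, hg1e⟩ := dstep f 1 hdf (by
    intro z hz
    have h := hgrow z (hzn z hz).le
    rw [hf0, sub_zero]
    nlinarith [hzn z hz, norm_nonneg (f z)])
  have hg10 : dslope f 0 0 = deriv f 0 := dslope_same f 0
  obtain ⟨hg2d, hg2, hg2e⟩ := dstep (dslope f 0) 6 hg1d (by
    intro z hz
    have h1 := hg1 z hz
    calc ‖dslope f 0 z - dslope f 0 0‖ ≤ ‖dslope f 0 z‖ + ‖dslope f 0 0‖ := norm_sub_le _ _
    _ ≤ 4 * 1 + 1 := by rw [hg10]; exact add_le_add h1 hb₀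
    _ < 6 := by norm_num)
  have hLf : ∀ z ∈ Metric.ball (0:ℂ) (1/4), ‖f z - deriv f 0 * z‖ ≤ 30 * ‖z‖^2 := by
    intro z hz
    have e : f z - deriv f 0 * z = z * (z * dslope (dslope f 0) 0 z) := by
      have e1 := hg1e z
      have e2 := hg2e z
      rw [hf0, zero_add] at e1
      rw [hg10] at e2
      rw [e1, e2]; ring
    rw [e]
    have h2 := hg2 z hz
    simp only [norm_mul]
    calc ‖z‖ * (‖z‖ * ‖dslope (dslope f 0) 0 z‖) ≤ ‖z‖ * (‖z‖ * 24) := by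
          apply mul_le_mul_of_nonneg_left _ (norm_nonneg z)
          apply mul_le_mul_of_nonneg_left _ (norm_nonneg z)
          linarith
    _ = 24 * ‖z‖^2 := by ring
    _ ≤ 30 * ‖z‖^2 := by nlinarith [norm_nonneg z]
  -- tower for F = deriv f
  have hFd : DifferentiableOn ℂ (deriv f) (Metric.ball 0 (1/4)) :=
    fun z hz => ((hf.deriv z (hsub hz)).differentiableAt).differentiableWithinAt
  have hFb : ∀ z ∈ Metric.ball (0:ℂ) (1/4), ‖deriv f z‖ ≤ 5/4 := by
    intro z hz
    have h1 := hderiv z (by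
      have := (hzn z hz).le
      linarith)
    have h2 := hgrow z (hzn z hz).le
    nlinarith [hzn z hz, norm_nonneg (f z)]
  obtain ⟨hh1d, hh1, hh1e⟩ := dstep (deriv f) 3 hFd (by
    intro z hz
    calc ‖deriv f z - deriv f 0‖ ≤ ‖deriv f z‖ + ‖deriv f 0‖ := norm_sub_le _ _
    _ ≤ 5/4 + 1 := add_le_add (hFb z hz) hb₀
    _ < 3 := by norm_num)
  set h1 := dslope (deriv f) 0 with hh1def
  set b₁ := h1 0 with hb₁def
  have hb₁ : ‖b₁‖ ≤ 12 := by
    have h := hh1 0 (Metric.mem_ball_self (by norm_num))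
    rw [hb₁def]
    exact h.trans (by norm_num)
  obtain ⟨hh2d, hh2, hh2e⟩ := dstep h1 25 hh1d (by
    intro z hz
    calc ‖h1 z - h1 0‖ ≤ ‖h1 z‖ + ‖h1 0‖ := norm_sub_le _ _
    _ ≤ 4 * 3 + 12 := add_le_add (hh1 z hz) hb₁
    _ < 25 := by norm_num)
  set h2 := dslope h1 0 with hh2def
  set b₂ := h2 0 with hb₂def
  have hb₂ : ‖b₂‖ ≤ 100 := by
    have h := hh2 0 (Metric.mem_ball_self (by norm_num))
    rw [hb₂def]
    exact h.trans (by norm_num)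
  obtain ⟨hh3d, hh3, hh3e⟩ := dstep h2 201 hh2d (by
    intro z hz
    calc ‖h2 z - h2 0‖ ≤ ‖h2 z‖ + ‖h2 0‖ := norm_sub_le _ _
    _ ≤ 4 * 25 + 100 := add_le_add (hh2 z hz) hb₂
    _ < 201 := by norm_num)
  set h3 := dslope h2 0 with hh3def
  refine ⟨b₁, b₂, hb₁, hb₂, hLf, ?_⟩
  intro z hz
  have e : deriv f z - (deriv f 0 + b₁*z + b₂*z^2) = z^3 * h3 z := by
    have e1 := hh1e z
    have e2 := hh2e z
    have e3 := hh3e z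
    rw [e1, e2, e3]; ring
  rw [e, norm_mul, norm_pow]
  have h3b := hh3 z hz
  have : ‖h3 z‖ ≤ 804 := by linarith
  calc ‖z‖^3 * ‖h3 z‖ ≤ ‖z‖^3 * 804 := by
        apply mul_le_mul_of_nonneg_left this (by positivity)
  _ = 804 * ‖z‖^3 := by ring

lemma align_pow (a c : ℂ) (ρ : ℝ) (hρ : 0 < ρ) (ha : a ≠ 0) (n : ℕ) (hn : n ≠ 0) :
    ∃ w : ℂ, ‖w‖ = ρ ∧ ‖a + c * w^n‖ = ‖a‖ + ‖c‖ * ρ^n := by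
  rcases eq_or_ne c 0 with rfl | hc
  · exact ⟨(ρ:ℂ), by simpa using abs_of_pos hρ, by simp⟩
  · set u := a * (starRingEnd ℂ) c with hu_def
    have hu : u ≠ 0 := mul_ne_zero ha (by simpa using hc)
    have hun : ‖u‖ ≠ 0 := norm_ne_zero_iff.mpr hu
    have hunC : ((‖u‖:ℝ):ℂ) ≠ 0 := by exact_mod_cast hun
    have han : ‖a‖ ≠ 0 := norm_ne_zero_iff.mpr ha
    have hcn : ‖c‖ ≠ 0 := norm_ne_zero_iff.mpr hc
    set x := u / (‖u‖ : ℂ) with hx_def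
    have hxn : ‖x‖ = 1 := by
      rw [hx_def, norm_div, Complex.norm_real, Real.norm_eq_abs, abs_of_nonneg (norm_nonneg u)]
      exact div_self hun
    set v := x ^ ((n:ℂ)⁻¹) with hv_def
    have hvn : v ^ n = x := Complex.cpow_nat_inv_pow x hn
    have hv1 : ‖v‖ = 1 := by
      have h1 : ‖v‖ ^ n = 1 := by rw [← norm_pow, hvn, hxn]
      rcases lt_trichotomy ‖v‖ 1 with h | h | h
      · exact absurd h1 (by have := pow_lt_one₀ (norm_nonneg v) h hn; linarith)
      · exact h
      · exact absurd h1 (by have := one_lt_pow₀ h hn; linarith)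
    have hcu : c * u = a * ((‖c‖^2 : ℝ) : ℂ) := by
      calc c * u = a * (c * (starRingEnd ℂ) c) := by rw [hu_def]; ring
      _ = a * ((‖c‖^2 : ℝ) : ℂ) := by
          rw [Complex.mul_conj, Complex.normSq_eq_norm_sq]
    set t : ℝ := ρ^n * ‖c‖^2 / ‖u‖ with ht_def
    have ht : 0 ≤ t := by positivity
    refine ⟨(ρ:ℂ) * v, ?_, ?_⟩
    · rw [norm_mul, hv1, mul_one, Complex.norm_real, Real.norm_eq_abs, abs_of_pos hρ]
    · have hwn : ((ρ:ℂ) * v)^n = ((ρ^n : ℝ) : ℂ) * x := by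
        rw [mul_pow, hvn]; push_cast; ring
      have e0 : (t:ℂ) = ((ρ^n : ℝ):ℂ) * ((‖c‖^2:ℝ):ℂ) / ((‖u‖:ℝ):ℂ) := by
        rw [ht_def]; push_cast; ring
      have e1 : a + c * ((ρ:ℂ) * v)^n = a * (1 + (t:ℂ)) := by
        calc a + c * ((ρ:ℂ) * v)^n = a + ((ρ^n : ℝ):ℂ) * (c * u) / ((‖u‖:ℝ):ℂ) := by
              rw [hwn, hx_def]; ring
        _ = a + ((ρ^n : ℝ):ℂ) * (a * ((‖c‖^2:ℝ):ℂ)) / ((‖u‖:ℝ):ℂ) := by rw [hcu]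
        _ = a * (1 + (t:ℂ)) := by rw [e0]; ring
      rw [e1, norm_mul]
      have e2 : (1 + (t:ℂ)) = ((1+t : ℝ):ℂ) := by push_cast; ring
      rw [e2, Complex.norm_real, Real.norm_eq_abs, abs_of_nonneg (by linarith)]
      have hut : ‖u‖ = ‖a‖ * ‖c‖ := by
        rw [hu_def, norm_mul, RCLike.norm_conj]
      have e3 : ‖a‖ * t = ρ^n * ‖c‖ := by
        have han' : ‖a‖ ≠ 0 := han
        have hcn' : ‖c‖ ≠ 0 := hcn
        rw [ht_def, hut]
        field_simp
      calc ‖a‖ * (1 + t) = ‖a‖ + ‖a‖ * t := by ring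
      _ = ‖a‖ + ‖c‖ * ρ^n := by rw [e3]; ring

lemma sector_extremal (f : ℂ → ℂ) (b₁ b₂ : ℂ)
    (hderiv : ∀ z : ℂ, ‖z‖ ≤ 1 →
      ‖deriv f z‖ ≤ 1 + ‖f z‖ ^ 2)
    (hlow : 1 - 10 ^ (-100 : ℤ) ≤ ‖deriv f 0‖)
    (hb0 : ‖deriv f 0‖ ≤ 1)
    (hb₁ : ‖b₁‖ ≤ 12) (hb₂ : ‖b₂‖ ≤ 100)
    (hLf : ∀ z ∈ Metric.ball (0:ℂ) (1/4), ‖f z - deriv f 0 * z‖ ≤ 30 * ‖z‖^2)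
    (hexp : ∀ z ∈ Metric.ball (0:ℂ) (1/4),
      ‖deriv f z - (deriv f 0 + b₁*z + b₂*z^2)‖ ≤ 804*‖z‖^3) :
    ‖b₁‖ ≤ 2 * 10^((-48:ℤ)) ∧ ‖b₂‖ ≤ 1 + 10^((-21:ℤ)) := by
  set b₀ := deriv f 0 with hb₀def
  have hlow' : 1 - 10 ^ ((-100:ℤ)) ≤ ‖b₀‖ := by
    exact_mod_cast hlow
  have ha : b₀ ≠ 0 := by
    intro h
    rw [h, norm_zero] at hlow'
    norm_num at hlow'
  -- key estimate at any small w
  have key : ∀ w : ℂ, ‖w‖ ≤ 10^((-25:ℤ)) →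
      ‖b₀ + b₁*w + b₂*w^2‖ ≤ 1 + (‖w‖ + 30*‖w‖^2)^2 + 804*‖w‖^3 := by
    intro w hw
    have hw4 : ‖w‖ < 1/4 := lt_of_le_of_lt hw (by norm_num)
    have hwb : w ∈ Metric.ball (0:ℂ) (1/4) := by
      simpa [dist_zero_right] using hw4
    have h1 := hexp w hwb
    have h2 := hLf w hwb
    have h3 := hderiv w (by linarith)
    have hfw : ‖f w‖ ≤ ‖w‖ + 30*‖w‖^2 := by
      have ht := norm_sub_le (f w - b₀*w) (-(b₀*w))
      simp only [sub_neg_eq_add, sub_add_cancel, norm_neg] at ht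
      have : ‖b₀*w‖ ≤ ‖w‖ := by
        rw [norm_mul]
        nlinarith [norm_nonneg w, norm_nonneg b₀]
      linarith
    have hFw : ‖deriv f w‖ ≤ 1 + (‖w‖ + 30*‖w‖^2)^2 := by
      nlinarith [norm_nonneg (f w), norm_nonneg w]
    have htri : ‖b₀ + b₁*w + b₂*w^2‖ - ‖deriv f w‖ ≤
        ‖deriv f w - (b₀ + b₁*w + b₂*w^2)‖ := by
      rw [norm_sub_rev]
      exact norm_sub_norm_le _ _
    linarith
  have hb₁b : ‖b₁‖ ≤ 2 * 10^((-48:ℤ)) := by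
    rcases eq_or_ne b₁ 0 with rfl | hb₁0
    · simp
    · obtain ⟨w, hwn, hwa⟩ := align_pow b₀ b₁ (10^((-50:ℤ))) (by positivity) ha 1 one_ne_zero
      simp only [pow_one] at hwa
      have hk := key w (by rw [hwn]; norm_num)
      have htri : ‖b₀ + b₁*w‖ - ‖b₂*w^2‖ ≤ ‖b₀ + b₁*w + b₂*w^2‖ := by
        have h := norm_sub_le (b₀ + b₁*w + b₂*w^2) (b₂*w^2)
        simp only [add_sub_cancel_right] at h
        linarith
      have hbw : ‖b₂*w^2‖ ≤ 100 * ‖w‖^2 := by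
        rw [norm_mul, norm_pow]
        nlinarith [norm_nonneg w, pow_nonneg (norm_nonneg w) 2]
      rw [hwa] at htri
      rw [hwn] at hk hbw
      -- now pure arithmetic
      have hq : (10:ℝ)^((-50:ℤ)) = 1/10^50 := by norm_num
      have he : (10:ℝ)^((-100:ℤ)) = 1/10^100 := by norm_num
      have hg : (2:ℝ) * 10^((-48:ℤ)) = 200/10^50 := by norm_num
      rw [hq] at htri hk hbw
      rw [he] at hlow'
      rw [hg]
      linarith
  refine ⟨hb₁b, ?_⟩
  rcases eq_or_ne b₂ 0 with rfl | hb₂0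
  · simp; positivity
  · obtain ⟨w, hwn, hwa⟩ := align_pow b₀ b₂ (10^((-25:ℤ))) (by positivity) ha 2 two_ne_zero
    have hk := key w (by rw [hwn])
    have htri : ‖b₀ + b₂*w^2‖ - ‖b₁*w‖ ≤ ‖b₀ + b₁*w + b₂*w^2‖ := by
      have h := norm_sub_le (b₀ + b₁*w + b₂*w^2) (b₁*w)
      have e : b₀ + b₁*w + b₂*w^2 - b₁*w = b₀ + b₂*w^2 := by ring
      rw [e] at h
      linarith
    have hbw : ‖b₁*w‖ ≤ (2 * 10^((-48:ℤ))) * ‖w‖ := by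
      rw [norm_mul]
      nlinarith [norm_nonneg w, norm_nonneg b₁]
    rw [hwa] at htri
    rw [hwn] at hk hbw
    have hq : (10:ℝ)^((-25:ℤ)) = 1/10^25 := by norm_num
    have he : (10:ℝ)^((-100:ℤ)) = 1/10^100 := by norm_num
    have hg : (10:ℝ)^((-21:ℤ)) = 1/10^21 := by norm_num
    have hn : (2:ℝ) * 10^((-48:ℤ)) = 2/10^48 := by norm_num
    rw [hq] at htri hk hbw
    rw [he] at hlow'
    rw [hn] at hbw
    rw [hg]
    linarith

lemma normsq_expand (a b : ℂ) (r θ : ℝ) :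
    ‖a + b * ((r:ℂ) * Complex.exp (θ * Complex.I))^2‖^2
      = ‖a‖^2 + ‖b‖^2 * r^4
        + 2*((a * (starRingEnd ℂ) b).re * Real.cos (2*θ)
             + (a * (starRingEnd ℂ) b).im * Real.sin (2*θ)) * r^2 := by
  have hsq : ∀ w : ℂ, ‖w‖^2 = Complex.normSq w := fun w => by
    rw [Complex.sq_norm]
  rw [hsq, hsq, hsq, Complex.exp_mul_I, ← Complex.ofReal_cos, ← Complex.ofReal_sin,
    Real.cos_two_mul, Real.sin_two_mul]
  set c := Real.cos θ
  set s := Real.sin θ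
  have hpyth : s^2 + c^2 = 1 := Real.sin_sq_add_cos_sq θ
  have hz2 : ((r:ℂ) * ((c:ℝ) + (s:ℝ)*Complex.I : ℂ))^2
      = ((r^2*(c^2-s^2) : ℝ) : ℂ) + ((r^2*(2*c*s) : ℝ):ℂ) * Complex.I := by
    apply Complex.ext <;>
      simp [pow_two, Complex.mul_re, Complex.mul_im, Complex.add_re, Complex.add_im,
        Complex.ofReal_re, Complex.ofReal_im, Complex.I_re, Complex.I_im] <;> ring
  rw [hz2]
  simp only [Complex.normSq_apply, Complex.add_re, Complex.add_im, Complex.mul_re,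
    Complex.mul_im, Complex.ofReal_re, Complex.ofReal_im, Complex.I_re, Complex.I_im,
    Complex.conj_re, Complex.conj_im]
  ring_nf
  linear_combination ((b.re^2 + b.im^2) * r^4 * (1 + s^2 + c^2)
      - 2*r^2*(a.re*b.re + a.im*b.im)) * hpyth

set_option maxHeartbeats 1000000 in
lemma sector_pointwise (f : ℂ → ℂ) (b₁ b₂ : ℂ)
    (hb0u : ‖deriv f 0‖ ≤ 1) (hb0l : 1 - 10^((-100:ℤ)) ≤ ‖deriv f 0‖)
    (hb₁b : ‖b₁‖ ≤ 2 * 10^((-48:ℤ))) (hb₂b : ‖b₂‖ ≤ 1 + 10^((-21:ℤ)))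
    (hLf : ∀ z ∈ Metric.ball (0:ℂ) (1/4), ‖f z - deriv f 0 * z‖ ≤ 30 * ‖z‖^2)
    (hexp : ∀ z ∈ Metric.ball (0:ℂ) (1/4),
      ‖deriv f z - (deriv f 0 + b₁*z + b₂*z^2)‖ ≤ 804*‖z‖^3)
    (θ r : ℝ) (hr0 : 0 ≤ r) (hr : r ≤ (10:ℝ)^((-10:ℤ))) :
    ‖deriv f ((r:ℂ) * Complex.exp (θ * Complex.I))‖ ^ 2 /
      (1 + ‖f ((r:ℂ) * Complex.exp (θ * Complex.I))‖ ^ 2) ^ 2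
    ≤ 1 + 2*(((deriv f 0) * (starRingEnd ℂ) b₂).re * Real.cos (2*θ)
        + ((deriv f 0) * (starRingEnd ℂ) b₂).im * Real.sin (2*θ) - 1) * r^2
      + 10^((-16:ℤ)) * r := by
  have hr10 : r ≤ 1/10^10 := hr.trans_eq (by norm_num)
  have hb₁b' : ‖b₁‖ ≤ 2/10^48 := hb₁b.trans_eq (by norm_num)
  have hb₂b' : ‖b₂‖ ≤ 1 + 1/10^21 := hb₂b.trans_eq (by norm_num)
  have hb0l' : 1 - 1/10^100 ≤ ‖deriv f 0‖ := by
    have e : (1:ℝ) - 10^((-100:ℤ)) = 1 - 1/10^100 := by norm_num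
    rw [← e]; exact hb0l
  clear hb₁b hb₂b hb0l
  set b₀ := deriv f 0 with hb₀def
  set z := (r:ℂ) * Complex.exp (θ * Complex.I) with hzdef
  set K := (b₀ * (starRingEnd ℂ) b₂).re * Real.cos (2*θ)
        + (b₀ * (starRingEnd ℂ) b₂).im * Real.sin (2*θ) with hKdef
  -- monomial bounds
  have m2 : r^2 ≤ (1/10^10)*r := by
    have h := mul_nonneg hr0 (by linarith : (0:ℝ) ≤ 1/10^10 - r)
    linarith only [h]
  have m3 : r^3 ≤ (1/10^20)*r := by
    have t := mul_le_mul_of_nonneg_left m2 hr0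
    linarith only [t, m2]
  have m4 : r^4 ≤ (1/10^30)*r := by
    have t := mul_le_mul_of_nonneg_left m3 hr0
    linarith only [t, m2]
  have hrB : r ≤ 1/10 := by linarith
  have hrB2 : r^2 ≤ 1/100 := by linarith only [m2, hr10]
  have hrB3 : r^3 ≤ 1/100 := by linarith only [m3, hr10]
  have hrB4 : r^4 ≤ 1/100 := by linarith only [m4, hr10]
  have hzn : ‖z‖ = r := by
    rw [hzdef, norm_mul, Complex.norm_exp]
    simp [abs_of_nonneg hr0]
  have hzb : z ∈ Metric.ball (0:ℂ) (1/4) := by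
    simp only [Metric.mem_ball, dist_zero_right, hzn]
    linarith
  -- bounds on m = |f z|
  set m := ‖f z‖ with hmdef
  have hm0 : 0 ≤ m := norm_nonneg _
  have hm_low : ‖b₀‖ * r - 30*r^2 ≤ m := by
    have h2 := hLf z hzb
    rw [hzn] at h2
    have ht := norm_sub_le (f z) (f z - b₀*z)
    simp only [sub_sub_cancel] at ht
    rw [norm_mul, hzn] at ht
    linarith
  -- K bounds
  have hKabs : K ≤ 2 ∧ -2 ≤ K := by
    have hBnorm : ‖b₀ * (starRingEnd ℂ) b₂‖ ≤ 2 := by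
      rw [norm_mul, RCLike.norm_conj]
      calc ‖b₀‖ * ‖b₂‖ ≤ 1 * (1 + 1/10^21) :=
            mul_le_mul hb0u hb₂b' (norm_nonneg b₂) zero_le_one
      _ ≤ 2 := by norm_num
    set B := b₀ * (starRingEnd ℂ) b₂ with hBdef
    have h1 : B.re^2 + B.im^2 ≤ 4 := by
      have e : B.re^2 + B.im^2 = ‖B‖^2 := by
        rw [Complex.sq_norm, Complex.normSq_apply]; ring
      rw [e]
      nlinarith [norm_nonneg B]
    have h2 : Real.sin (2*θ)^2 + Real.cos (2*θ)^2 = 1 := Real.sin_sq_add_cos_sq _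
    constructor
    · nlinarith [sq_nonneg (B.re * Real.sin (2*θ) - B.im * Real.cos (2*θ)),
        sq_nonneg (B.re * Real.cos (2*θ) + B.im * Real.sin (2*θ) - 2)]
    · nlinarith [sq_nonneg (B.re * Real.sin (2*θ) - B.im * Real.cos (2*θ)),
        sq_nonneg (B.re * Real.cos (2*θ) + B.im * Real.sin (2*θ) + 2)]
  -- upper bound on A = |deriv f z|
  set A := ‖deriv f z‖ with hAdef
  have hA0 : 0 ≤ A := norm_nonneg _
  set W := ‖b₀ + b₂ * z^2‖ with hWdef
  have hW0 : 0 ≤ W := norm_nonneg _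
  have hW2 : W^2 = ‖b₀‖^2 + ‖b₂‖^2 * r^4 + 2*K*r^2 := normsq_expand b₀ b₂ r θ
  have hb0sq : ‖b₀‖^2 ≤ 1 := by
    have h := mul_self_le_mul_self (norm_nonneg b₀) hb0u
    linarith only [h]
  have hb2sq : ‖b₂‖^2 ≤ 2 := by
    have h := mul_self_le_mul_self (norm_nonneg b₂) hb₂b'
    linarith only [h]
  have hA_up : A ≤ W + ((2/10^48) * r + 804 * r^3) := by
    have h1 := hexp z hzb
    rw [hzn] at h1
    have ht : A - ‖b₀ + b₁*z + b₂*z^2‖ ≤ ‖deriv f z - (b₀ + b₁*z + b₂*z^2)‖ :=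
      norm_sub_norm_le _ _
    have ht2 : ‖b₀ + b₁*z + b₂*z^2‖ ≤ W + ‖b₁‖ * r := by
      have e : b₀ + b₁*z + b₂*z^2 = (b₀ + b₂*z^2) + b₁*z := by ring
      rw [e, hWdef]
      calc ‖(b₀ + b₂*z^2) + b₁*z‖ ≤ ‖b₀ + b₂*z^2‖ + ‖b₁*z‖ := norm_add_le _ _
      _ = ‖b₀ + b₂*z^2‖ + ‖b₁‖ * r := by rw [norm_mul, hzn]
    have hb1r : ‖b₁‖ * r ≤ (2/10^48) * r := mul_le_mul_of_nonneg_right hb₁b' hr0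
    linarith
  -- W ≤ 11/10
  have hKr2 : K*r^2 ≤ 2*r^2 := mul_le_mul_of_nonneg_right hKabs.1 (sq_nonneg r)
  have hb2r4 : ‖b₂‖^2 * r^4 ≤ 2 * r^4 :=
    mul_le_mul_of_nonneg_right hb2sq (pow_nonneg hr0 4)
  have hW2up : W^2 ≤ 1 + 2*r^4 + 4*r^2 := by rw [hW2]; linarith
  have hWle : W ≤ 11/10 := by
    by_contra hcon
    push_neg at hcon
    have h := mul_self_le_mul_self (by norm_num : (0:ℝ) ≤ 11/10) hcon.le
    linarith only [h, hW2up, hrB2, hrB4]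
  -- A² bound
  set u : ℝ := (2/10^48) * r + 804 * r^3 with hudef
  have hu0 : 0 ≤ u := by positivity
  have hrC3 : r^3 ≤ 1/10^30 := by linarith only [m3, hr10]
  have hu1 : u ≤ 1 := by rw [hudef]; linarith only [hr10, hrC3, hr0]
  clear_value z m A W u K
  have hAsq : A^2 ≤ W^2 + 4*u := by
    have h : A^2 ≤ (W+u)^2 := pow_le_pow_left₀ hA0 hA_up 2
    have hWu : W*u ≤ (11/10)*u := mul_le_mul_of_nonneg_right hWle hu0
    have huu : u*u ≤ 1*u := mul_le_mul_of_nonneg_right hu1 hu0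
    linarith only [h, hWu, huu, hu0]
  have hA2 : A^2 ≤ 1 + 2*K*r^2 + 2*r^4 + (8/10^48)*r + 3216*r^3 := by
    rw [hW2, hudef] at hAsq
    linarith
  -- m² and denominator lower bounds
  have hml : (1 - 1/10^100) * r - 30*r^2 ≤ m := by
    have h := mul_le_mul_of_nonneg_right hb0l' hr0
    linarith
  have hml0 : (0:ℝ) ≤ (1 - 1/10^100) * r - 30*r^2 := by linarith only [m2, hr0]
  have hm2 : m^2 ≥ r^2 - (2/10^100)*r^2 - 60*r^3 := by
    have h := mul_self_le_mul_self hml0 hml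
    linarith only [h, sq_nonneg r, pow_nonneg hr0 3, pow_nonneg hr0 4]
  have hD : (1 + m^2)^2 ≥ 1 + 2*r^2 - (4/10^100)*r^2 - 120*r^3 := by
    linarith only [hm2, sq_nonneg (m^2)]
  have hDpos : (0:ℝ) < (1 + m^2)^2 := by positivity
  -- reduce goal
  have hg16 : (10:ℝ)^((-16:ℤ)) = 1/10^16 := by norm_num
  rw [
    div_le_iff₀ hDpos, hg16]
  set P : ℝ := 2*r^2 - (4/10^100)*r^2 - 120*r^3 with hPdef
  have hP0 : 0 ≤ P := by
    have h := mul_le_mul_of_nonneg_left m2 hr0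
    rw [hPdef]
    linarith only [h, sq_nonneg r]
  have hPle : P ≤ 2*r^2 := by
    rw [hPdef]
    linarith only [pow_nonneg hr0 3, sq_nonneg r]
  have hKP : (K+2)*(r^2*P) ≥ 0 :=
    mul_nonneg (by linarith [hKabs.2]) (mul_nonneg (sq_nonneg r) hP0)
  have hr2P : r^2*P ≤ 2*r^4 := by
    have h := mul_le_mul_of_nonneg_left hPle (sq_nonneg r)
    linarith only [h]
  have hrP0 : 0 ≤ (1/10^16)*r*P := by positivity
  have hPsub : P - 2*r^2 = -(4/10^100)*r^2 - 120*r^3 := by rw [hPdef]; ring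
  have hδr : (0:ℝ) ≤ (1/10^16)*r := by positivity
  have hRHS0 : 0 ≤ 1 + 2*(K - 1)*r^2 + (1/10^16)*r := by
    have h := mul_nonneg (by linarith [hKabs.2] : (0:ℝ) ≤ K + 2) (sq_nonneg r)
    linarith only [h, hrB2, hδr]
  clear_value P
  have hexpand : (1 + 2*(K - 1)*r^2 + (1/10^16)*r) * (1 + P)
      = 1 + 2*K*r^2 + 2*(K-1)*(r^2*P) + (1/10^16)*r + (1/10^16)*r*P + (P - 2*r^2) := by
    ring
  have hstep : A^2 ≤ (1 + 2*(K - 1)*r^2 + (1/10^16)*r) * (1 + P) := by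
    rw [hexpand, hPsub]
    linarith only [hA2, hKP, hr2P, m2, m3, m4, hrP0, hr0]
  calc A^2 ≤ (1 + 2*(K - 1)*r^2 + (1/10^16)*r) * (1 + P) := hstep
  _ ≤ (1 + 2*(K - 1)*r^2 + (1/10^16)*r) * (1 + m^2)^2 := by
      apply mul_le_mul_of_nonneg_left _ hRHS0
      rw [hPdef]
      linarith [hD]

lemma int_cos2 (α : ℝ) : (∫ θ in α..(α + Real.pi/2), Real.cos (2*θ)) = -Real.sin (2*α) := by
  rw [intervalIntegral.integral_comp_mul_left (fun x => Real.cos x) (by norm_num : (2:ℝ) ≠ 0)]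
  rw [integral_cos]
  have : 2*(α + Real.pi/2) = 2*α + Real.pi := by ring
  rw [this, Real.sin_add_pi]
  simp
  ring

lemma int_sin2 (α : ℝ) : (∫ θ in α..(α + Real.pi/2), Real.sin (2*θ)) = Real.cos (2*α) := by
  rw [intervalIntegral.integral_comp_mul_left (fun x => Real.sin x) (by norm_num : (2:ℝ) ≠ 0)]
  rw [integral_sin]
  have : 2*(α + Real.pi/2) = 2*α + Real.pi := by ring
  rw [this, Real.cos_add_pi]
  simp
  ring

set_option maxHeartbeats 1000000 in
lemma sector_integral (f : ℂ → ℂ) (B : ℂ)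
    (hfa : ∀ w ∈ Metric.closedBall (0:ℂ) 1, ContinuousAt f w)
    (hFa : ∀ w ∈ Metric.closedBall (0:ℂ) 1, ContinuousAt (deriv f) w)
    (hB : ‖B‖ ≤ 1 + 10^((-21:ℤ)))
    (hpt : ∀ θ r : ℝ, 0 ≤ r → r ≤ (10:ℝ)^((-10:ℤ)) →
      ‖deriv f ((r:ℂ) * Complex.exp (θ * Complex.I))‖ ^ 2 /
        (1 + ‖f ((r:ℂ) * Complex.exp (θ * Complex.I))‖ ^ 2) ^ 2
      ≤ 1 + 2*(B.re * Real.cos (2*θ) + B.im * Real.sin (2*θ) - 1) * r^2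
        + 10^((-16:ℤ)) * r) (α : ℝ) :
    (4 / (Real.pi * ((10 : ℝ) ^ (-10 : ℤ)) ^ 2)) *
        ∫ θ in α..(α + Real.pi / 2),
          ∫ r in (0 : ℝ)..(10 : ℝ) ^ (-10 : ℤ),
            (‖deriv f ((r : ℂ) * Complex.exp (θ * Complex.I))‖ ^ 2 /
              (1 + ‖f ((r : ℂ) * Complex.exp (θ * Complex.I))‖ ^ 2) ^ 2) * r
      ≤ 1 - (1 / 4) * ((10 : ℝ) ^ (-10 : ℤ)) ^ 2 + Real.sqrt (10 ^ (-100 : ℤ)) := by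
  have hπ : (3.141592 : ℝ) < Real.pi := Real.pi_gt_d6
  have hπ0 : (0:ℝ) < Real.pi := by linarith
  set R : ℝ := (10 : ℝ) ^ (-10 : ℤ) with hRdef
  have hRval : R = 1/10^10 := by rw [hRdef]; norm_num
  have hR0 : 0 < R := by rw [hRval]; norm_num
  have hR1 : R ≤ 1 := by rw [hRval]; norm_num
  clear_value R
  -- clamp
  set c : ℝ → ℝ := fun x => max 0 (min x R) with hcdef
  have hc_cont : Continuous c := continuous_const.max (continuous_id.min continuous_const)
  have hc_eq : ∀ x ∈ Icc (0:ℝ) R, c x = x := by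
    intro x hx
    rw [hcdef]
    simp only [min_eq_left hx.2, max_eq_right hx.1]
  have hc0 : ∀ x, 0 ≤ c x := fun x => le_max_left _ _
  have hcR : ∀ x, c x ≤ R := fun x => max_le (by linarith) (min_le_right _ _)
  clear_value c
  -- clamped integrand
  set Gc : ℝ → ℝ → ℝ := fun θ x =>
    (‖deriv f ((c x : ℂ) * Complex.exp (θ * Complex.I))‖ ^ 2 /
      (1 + ‖f ((c x : ℂ) * Complex.exp (θ * Complex.I))‖ ^ 2) ^ 2) * (c x)
    with hGcdef
  -- continuity of uncurried Gc
  set ψ : ℝ × ℝ → ℂ := fun p => ((c p.2 : ℝ) : ℂ) * Complex.exp ((p.1:ℂ) * Complex.I)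
    with hψdef
  have hψc : Continuous ψ := by
    apply Continuous.mul
    · exact Complex.continuous_ofReal.comp (hc_cont.comp continuous_snd)
    · exact Complex.continuous_exp.comp
        ((Complex.continuous_ofReal.comp continuous_fst).mul continuous_const)
  have hψmem : ∀ p : ℝ × ℝ, ψ p ∈ Metric.closedBall (0:ℂ) 1 := by
    intro p
    rw [hψdef]
    simp only [Metric.mem_closedBall, dist_zero_right, norm_mul]
    rw [Complex.norm_exp]
    simp only [Complex.norm_real, Real.norm_eq_abs]
    rw [abs_of_nonneg (hc0 p.2)]
    have : ((p.1:ℂ) * Complex.I).re = 0 := by simp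
    rw [this, Real.exp_zero, mul_one]
    linarith [hcR p.2]
  have hfψ : Continuous (fun p : ℝ × ℝ => f (ψ p)) := by
    rw [continuous_iff_continuousAt]
    intro p
    exact (hfa _ (hψmem p)).comp hψc.continuousAt
  have hFψ : Continuous (fun p : ℝ × ℝ => deriv f (ψ p)) := by
    rw [continuous_iff_continuousAt]
    intro p
    exact (hFa _ (hψmem p)).comp hψc.continuousAt
  have hden : ∀ p : ℝ × ℝ, (1 + ‖f (ψ p)‖ ^ 2) ^ 2 ≠ 0 := by
    intro p
    have := norm_nonneg (f (ψ p))
    positivity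
  have hGcu : Continuous (Function.uncurry Gc) := by
    have h1 : Continuous (fun p : ℝ × ℝ => ‖deriv f (ψ p)‖ ^ 2) :=
      (hFψ.norm).pow 2
    have h2 : Continuous (fun p : ℝ × ℝ => (1 + ‖f (ψ p)‖ ^ 2) ^ 2) :=
      ((continuous_const.add ((hfψ.norm).pow 2)).pow 2)
    exact ((h1.div h2 hden).mul (hc_cont.comp continuous_snd))
  -- continuity of inner integral
  have hI_cont : Continuous (fun θ => ∫ r in (0:ℝ)..R, Gc θ r) :=
    intervalIntegral.continuous_parametric_intervalIntegral_of_continuous' hGcu 0 R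
  -- inner bound
  set KK : ℝ → ℝ := fun θ => B.re * Real.cos (2*θ) + B.im * Real.sin (2*θ) with hKKdef
  set P : ℝ → ℝ → ℝ := fun θ r => r + 2*(KK θ - 1)*r^3 + (1/10^16)*r^2 with hPdef
  have hg16 : (10:ℝ)^((-16:ℤ)) = 1/10^16 := by norm_num
  have hGcP : ∀ θ, ∀ r ∈ Icc (0:ℝ) R, Gc θ r ≤ P θ r := by
    intro θ r hr
    have h := hpt θ r hr.1 hr.2
    have h2 := mul_le_mul_of_nonneg_right h hr.1
    rw [hGcdef, hPdef]
    simp only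
    rw [hc_eq r hr]
    calc (‖deriv f ((r:ℂ) * Complex.exp (θ * Complex.I))‖ ^ 2 /
        (1 + ‖f ((r:ℂ) * Complex.exp (θ * Complex.I))‖ ^ 2) ^ 2) * r
        ≤ (1 + 2*(B.re * Real.cos (2*θ) + B.im * Real.sin (2*θ) - 1) * r^2
            + 10^((-16:ℤ)) * r) * r := h2
    _ = r + 2*(KK θ - 1)*r^3 + (1/10^16)*r^2 := by rw [hg16, hKKdef]; ring
  have hcont3 : ∀ a : ℝ, Continuous (fun r : ℝ => a*r^3) :=
    fun a => continuous_const.mul (continuous_pow 3)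
  have hcont2 : ∀ a : ℝ, Continuous (fun r : ℝ => a*r^2) :=
    fun a => continuous_const.mul (continuous_pow 2)
  have hPc : ∀ θ, Continuous (P θ) := by
    intro θ
    rw [hPdef]
    exact (continuous_id.add (hcont3 (2*(KK θ - 1)))).add (hcont2 (1/10^16))
  have hPint : ∀ θ, IntervalIntegrable (P θ) MeasureTheory.volume 0 R :=
    fun θ => (hPc θ).intervalIntegrable 0 R
  have hGcint : ∀ θ, IntervalIntegrable (Gc θ) MeasureTheory.volume 0 R := by
    intro θ
    have hpair : Continuous (fun r : ℝ => ((θ, r) : ℝ × ℝ)) :=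
      continuous_const.prodMk continuous_id
    have hc2 : Continuous (fun r : ℝ => Function.uncurry Gc (θ, r)) := hGcu.comp hpair
    exact hc2.intervalIntegrable 0 R
  have hPval : ∀ θ, (∫ r in (0:ℝ)..R, P θ r)
      = R^2/2 + 2*(KK θ - 1)*(R^4/4) + (1/10^16)*(R^3/3) := by
    intro θ
    rw [hPdef]
    simp only
    have i1 : IntervalIntegrable (fun r : ℝ => r) MeasureTheory.volume 0 R :=
      continuous_id.intervalIntegrable 0 R
    have i3 : IntervalIntegrable (fun r : ℝ => 2*(KK θ - 1)*r^3) MeasureTheory.volume 0 R :=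
      (hcont3 _).intervalIntegrable 0 R
    have i2 : IntervalIntegrable (fun r : ℝ => (1/10^16)*r^2) MeasureTheory.volume 0 R :=
      (hcont2 _).intervalIntegrable 0 R
    rw [intervalIntegral.integral_add (i1.add i3) i2,
      intervalIntegral.integral_add i1 i3,
      intervalIntegral.integral_const_mul, intervalIntegral.integral_const_mul,
      integral_id, integral_pow, integral_pow]
    norm_num
  have hinner : ∀ θ, (∫ r in (0:ℝ)..R, Gc θ r)
      ≤ R^2/2 + 2*(KK θ - 1)*(R^4/4) + (1/10^16)*(R^3/3) := by
    intro θ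
    rw [← hPval θ]
    exact intervalIntegral.integral_mono_on hR0.le (hGcint θ) (hPint θ) (hGcP θ)
  -- outer integral
  have hple : α ≤ α + Real.pi/2 := by linarith
  set J : ℝ → ℝ := fun θ => R^2/2 + 2*(KK θ - 1)*(R^4/4) + (1/10^16)*(R^3/3) with hJdef
  have hcos2 : Continuous (fun θ : ℝ => Real.cos (2*θ)) :=
    Real.continuous_cos.comp (continuous_const.mul continuous_id)
  have hsin2 : Continuous (fun θ : ℝ => Real.sin (2*θ)) :=
    Real.continuous_sin.comp (continuous_const.mul continuous_id)
  have hKKc : Continuous KK := by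
    rw [hKKdef]
    exact (continuous_const.mul hcos2).add (continuous_const.mul hsin2)
  have hJc : Continuous J := by
    rw [hJdef]
    exact (continuous_const.add ((continuous_const.mul (hKKc.sub continuous_const)).mul
      continuous_const)).add continuous_const
  have hIint : IntervalIntegrable (fun θ => ∫ r in (0:ℝ)..R, Gc θ r)
      MeasureTheory.volume α (α + Real.pi/2) := hI_cont.intervalIntegrable _ _
  have hJint : IntervalIntegrable J MeasureTheory.volume α (α + Real.pi/2) :=
    hJc.intervalIntegrable _ _
  have houter : (∫ θ in α..(α + Real.pi/2), ∫ r in (0:ℝ)..R, Gc θ r)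
      ≤ ∫ θ in α..(α + Real.pi/2), J θ :=
    intervalIntegral.integral_mono_on hple hIint hJint (fun θ _ => hinner θ)
  -- evaluate ∫ J
  have hJval : (∫ θ in α..(α + Real.pi/2), J θ)
      = (Real.pi/2) * (R^2/2 - 2*(R^4/4) + (1/10^16)*(R^3/3))
        + (2*(R^4/4)) * (B.re * (-Real.sin (2*α)) + B.im * (Real.cos (2*α))) := by
    have e : ∀ θ, J θ = (R^2/2 - 2*(R^4/4) + (1/10^16)*(R^3/3))
        + ((2*(R^4/4)*B.re) * Real.cos (2*θ) + (2*(R^4/4)*B.im) * Real.sin (2*θ)) := by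
      intro θ
      rw [hJdef, hKKdef]
      simp only
      ring
    rw [intervalIntegral.integral_congr (g := fun θ => (R^2/2 - 2*(R^4/4) + (1/10^16)*(R^3/3))
        + ((2*(R^4/4)*B.re) * Real.cos (2*θ) + (2*(R^4/4)*B.im) * Real.sin (2*θ)))
        (fun θ _ => e θ)]
    have j1 : IntervalIntegrable (fun θ : ℝ => (2*(R^4/4)*B.re) * Real.cos (2*θ))
        MeasureTheory.volume α (α + Real.pi/2) :=
      (continuous_const.mul hcos2).intervalIntegrable _ _
    have j2 : IntervalIntegrable (fun θ : ℝ => (2*(R^4/4)*B.im) * Real.sin (2*θ))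
        MeasureTheory.volume α (α + Real.pi/2) :=
      (continuous_const.mul hsin2).intervalIntegrable _ _
    rw [intervalIntegral.integral_add (intervalIntegrable_const) (j1.add j2)]
    rw [intervalIntegral.integral_add j1 j2]
    rw [intervalIntegral.integral_const_mul, intervalIntegral.integral_const_mul]
    rw [int_cos2, int_sin2, intervalIntegral.integral_const]
    simp only [smul_eq_mul]
    ring_nf
  -- bound the trig part
  have htrig : B.re * (-Real.sin (2*α)) + B.im * (Real.cos (2*α)) ≤ 101/100 := by
    have h1 : B.re^2 + B.im^2 ≤ (101/100)^2 := by
      have e : B.re^2 + B.im^2 = ‖B‖^2 := by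
        rw [Complex.sq_norm, Complex.normSq_apply]; ring
      have hB' : ‖B‖ ≤ 101/100 :=
        hB.trans (by norm_num : (1:ℝ) + 10^((-21:ℤ)) ≤ 101/100)
      rw [e]
      nlinarith [norm_nonneg B]
    have h2 : Real.sin (2*α)^2 + Real.cos (2*α)^2 = 1 := Real.sin_sq_add_cos_sq _
    nlinarith [sq_nonneg (B.re * Real.cos (2*α) + B.im * Real.sin (2*α)),
      sq_nonneg (-(B.re * Real.sin (2*α)) + B.im * Real.cos (2*α) - 101/100)]
  -- put together
  have hS : (∫ θ in α..(α + Real.pi/2), ∫ r in (0:ℝ)..R, Gc θ r)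
      ≤ (Real.pi/2) * (R^2/2 - R^4/2 + (1/10^16)*(R^3/3)) + (R^4/2) * (101/100) := by
    rw [hJval] at houter
    have hc2 : (2*(R^4/4)) * (B.re * (-Real.sin (2*α)) + B.im * (Real.cos (2*α)))
        ≤ (R^4/2) * (101/100) := by
      have h := mul_le_mul_of_nonneg_left htrig (by positivity : (0:ℝ) ≤ R^4/2)
      calc (2*(R^4/4)) * (B.re * (-Real.sin (2*α)) + B.im * (Real.cos (2*α)))
          = (R^4/2) * (B.re * (-Real.sin (2*α)) + B.im * (Real.cos (2*α))) := by ring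
      _ ≤ (R^4/2) * (101/100) := h
    calc (∫ θ in α..(α + Real.pi/2), ∫ r in (0:ℝ)..R, Gc θ r)
        ≤ (Real.pi/2) * (R^2/2 - 2*(R^4/4) + (1/10^16)*(R^3/3))
          + (2*(R^4/4)) * (B.re * (-Real.sin (2*α)) + B.im * (Real.cos (2*α))) := houter
    _ ≤ (Real.pi/2) * (R^2/2 - R^4/2 + (1/10^16)*(R^3/3)) + (R^4/2) * (101/100) := by
        have e : (Real.pi/2) * (R^2/2 - 2*(R^4/4) + (1/10^16)*(R^3/3))
            = (Real.pi/2) * (R^2/2 - R^4/2 + (1/10^16)*(R^3/3)) := by ring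
        rw [e]
        linarith [hc2]
  -- replace the integrand in the goal by Gc
  have hgoal_eq : (∫ θ in α..(α + Real.pi / 2),
      ∫ r in (0 : ℝ)..R,
        (‖deriv f ((r : ℂ) * Complex.exp (θ * Complex.I))‖ ^ 2 /
          (1 + ‖f ((r : ℂ) * Complex.exp (θ * Complex.I))‖ ^ 2) ^ 2) * r)
      = ∫ θ in α..(α + Real.pi/2), ∫ r in (0:ℝ)..R, Gc θ r := by
    apply intervalIntegral.integral_congr
    intro θ _
    apply intervalIntegral.integral_congr
    intro r hr
    rw [uIcc_of_le hR0.le] at hr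
    rw [hGcdef]
    simp only
    rw [hc_eq r hr]
  rw [hgoal_eq]
  -- final numeric estimate
  have hsqrt : Real.sqrt ((10:ℝ) ^ (-100 : ℤ)) = 1/10^50 := by
    rw [show ((10:ℝ) ^ (-100 : ℤ)) = (1/10^50)^2 by norm_num]
    exact Real.sqrt_sq (by norm_num)
  rw [hsqrt]
  have hcoeff : 0 < 4 / (Real.pi * R^2) := by positivity
  have hmul := mul_le_mul_of_nonneg_left hS (le_of_lt hcoeff)
  refine le_trans hmul ?_
  -- (4/(π R²)) * ((π/2)(R²/2 − R⁴/2 + c) + (R⁴/2)(101/100)) ≤ 1 − (1/4)R² + 1e-50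
  have heval : 4 / (Real.pi * R^2) * ((Real.pi/2) * (R^2/2 - R^4/2 + (1/10^16)*(R^3/3))
      + (R^4/2) * (101/100))
      = (1 - R^2 + (2/3)*(1/10^16)*R) + (202/100) * R^2 / Real.pi := by
    have hRne : R ≠ 0 := ne_of_gt hR0
    have hπne : Real.pi ≠ 0 := ne_of_gt hπ0
    field_simp
    ring
  rw [heval, hRval]
  have hπinv : (202/100) * (1/10^10)^2 / Real.pi ≤ (202/100) * (1/10^10)^2 / 3.141592 := by
    apply div_le_div_of_nonneg_left (by norm_num) (by norm_num) (by linarith)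
  have : (202/100 : ℝ) * (1/10^10)^2 / 3.141592 ≤ (13/20) * (1/10^10)^2 := by norm_num
  linarith

/-- The average of `|df|²` over any circular sector of radius `r₀ = 10⁻¹⁰` and angle `π/2`
centered at the origin is at most `1 - r₀²/4 + √ε < 1 - 10⁻³⁰`, for `f` with `f(0) = 0`,
spherical derivative at most one and `|f′(0)| ≥ 1 - ε`, `ε = 10⁻¹⁰⁰`. -/
theorem sector_average_estimate (f : ℂ → ℂ)
    (hf : AnalyticOnNhd ℂ f (Metric.closedBall (0 : ℂ) 1))
    (hf0 : f 0 = 0)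
    (hderiv : ∀ z : ℂ, ‖z‖ ≤ 1 →
      ‖deriv f z‖ ≤ 1 + ‖f z‖ ^ 2)
    (hlow : 1 - 10 ^ (-100 : ℤ) ≤ ‖deriv f 0‖) :
    ∀ α : ℝ,
      (4 / (Real.pi * ((10 : ℝ) ^ (-10 : ℤ)) ^ 2)) *
          ∫ θ in α..(α + Real.pi / 2),
            ∫ r in (0 : ℝ)..(10 : ℝ) ^ (-10 : ℤ),
              (‖deriv f ((r : ℂ) * Complex.exp (θ * Complex.I))‖ ^ 2 /
                (1 + ‖f ((r : ℂ) * Complex.exp (θ * Complex.I))‖ ^ 2) ^ 2) * r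
        ≤ 1 - (1 / 4) * ((10 : ℝ) ^ (-10 : ℤ)) ^ 2 + Real.sqrt (10 ^ (-100 : ℤ)) ∧
      1 - (1 / 4) * ((10 : ℝ) ^ (-10 : ℤ)) ^ 2 + Real.sqrt ((10 : ℝ) ^ (-100 : ℤ)) <
        1 - 10 ^ (-30 : ℤ) := by
  have hgrow := sector_growth f hf hf0 hderiv
  obtain ⟨b₁, b₂, hb₁, hb₂, hLf, hexp⟩ := sector_expansion f hf hf0 hderiv hgrow
  have hb0u : ‖deriv f 0‖ ≤ 1 := by
    have h := hderiv 0 (by norm_num)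
    rw [hf0] at h
    simpa using h
  obtain ⟨hb₁b, hb₂b⟩ := sector_extremal f b₁ b₂ hderiv hlow hb0u hb₁ hb₂ hLf hexp
  have hb0l : 1 - 10^((-100:ℤ)) ≤ ‖deriv f 0‖ := by
    exact hlow
  have hpt := sector_pointwise f b₁ b₂ hb0u hb0l hb₁b hb₂b hLf hexp
  have hfa : ∀ w ∈ Metric.closedBall (0:ℂ) 1, ContinuousAt f w :=
    fun w hw => (hf w hw).continuousAt
  have hFa : ∀ w ∈ Metric.closedBall (0:ℂ) 1, ContinuousAt (deriv f) w :=
    fun w hw => ((hf.deriv) w hw).continuousAt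
  have hB : ‖deriv f 0 * (starRingEnd ℂ) b₂‖ ≤ 1 + 10^((-21:ℤ)) := by
    rw [norm_mul, RCLike.norm_conj]
    calc ‖deriv f 0‖ * ‖b₂‖ ≤ 1 * (1 + 10^((-21:ℤ))) :=
          mul_le_mul hb0u hb₂b (norm_nonneg _) zero_le_one
    _ = 1 + 10^((-21:ℤ)) := one_mul _
  intro α
  constructor
  · exact sector_integral f (deriv f 0 * (starRingEnd ℂ) b₂) hfa hFa hB hpt α
  · have hsqrt : Real.sqrt ((10:ℝ) ^ (-100 : ℤ)) = 1/10^50 := by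
      rw [show ((10:ℝ) ^ (-100 : ℤ)) = (1/10^50)^2 by norm_num]
      exact Real.sqrt_sq (by norm_num)
    rw [hsqrt]
    norm_num
end

section
/- Let g be a polynomial with complex coefficients of degree n ≥ 1. Then there exist positive constants r₀ and C such that for all r ≥ r₀: (1/(2π)) ∫₀^{2π} log⁺|exp(g(r e^{iθ}))| dθ ≥ C·rⁿ, where log⁺x := max(log x, 0). Equivalently, since log⁺|exp(g(z))| = max(Re g(z), 0), the proximity function m(r, e^g) of the entire function f = e^g grows at least like C rⁿ. -/
open intervalIntegral Complex Polynomial Finset MeasureTheory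

lemma exp_int_integral (m : ℤ) (hm : m ≠ 0) :
    ∫ θ in (0:ℝ)..(2*Real.pi), Complex.exp ((m:ℂ) * θ * Complex.I) = 0 := by
  have h : ∀ θ : ℝ, (m:ℂ) * θ * Complex.I = ((m:ℂ) * Complex.I) * θ := fun θ => by ring
  simp_rw [h]
  rw [integral_exp_mul_complex (by simp [hm, Complex.I_ne_zero])]
  have h2 : (m:ℂ) * Complex.I * (2*Real.pi : ℝ) = (m:ℂ) * (2 * Real.pi * Complex.I) := by
    push_cast; ring
  rw [h2, Complex.exp_int_mul_two_pi_mul_I]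
  simp

lemma poly_int (g : Polynomial ℂ) (r : ℝ) (m : ℤ) :
    ∫ θ in (0:ℝ)..(2*Real.pi),
      g.eval ((r:ℂ) * Complex.exp (θ * Complex.I)) * Complex.exp ((m:ℂ) * θ * Complex.I)
    = ∑ i ∈ Finset.range (g.natDegree+1),
        (if (i:ℤ) + m = 0 then (2*Real.pi) * g.coeff i * (r:ℂ)^i else 0) := by
  have key : ∀ θ : ℝ, g.eval ((r:ℂ) * Complex.exp (θ*Complex.I)) * Complex.exp ((m:ℂ)*θ*Complex.I)
      = ∑ i ∈ Finset.range (g.natDegree+1),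
          g.coeff i * (r:ℂ)^i * Complex.exp ((((i:ℤ)+m : ℤ):ℂ) * θ * Complex.I) := by
    intro θ
    rw [Polynomial.eval_eq_sum_range, Finset.sum_mul]
    refine Finset.sum_congr rfl fun i _ => ?_
    have h3 : Complex.exp ((i:ℂ)*(θ*Complex.I)) * Complex.exp ((m:ℂ)*θ*Complex.I)
        = Complex.exp ((((i:ℤ)+m : ℤ):ℂ) * θ * Complex.I) := by
      rw [← Complex.exp_add]; congr 1; push_cast; ring
    calc g.coeff i * ((r:ℂ) * Complex.exp (θ*Complex.I))^i * Complex.exp ((m:ℂ)*θ*Complex.I)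
        = g.coeff i * (r:ℂ)^i * (Complex.exp ((i:ℂ)*(θ*Complex.I)) * Complex.exp ((m:ℂ)*θ*Complex.I)) := by
          rw [mul_pow, ← Complex.exp_nat_mul]; ring
      _ = _ := by rw [h3]
  simp_rw [key]
  rw [intervalIntegral.integral_finset_sum]
  · refine Finset.sum_congr rfl fun i _ => ?_
    rw [intervalIntegral.integral_const_mul]
    by_cases h : (i:ℤ) + m = 0
    · simp only [h, if_pos]
      simp only [h, Int.cast_zero, zero_mul, Complex.exp_zero]
      rw [intervalIntegral.integral_const]
      have : ((2*Real.pi - 0 : ℝ) • (1:ℂ)) = ((2*Real.pi : ℝ) : ℂ) := by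
        simp [Complex.real_smul]
      rw [this]; push_cast; ring
    · rw [exp_int_integral _ h]
      simp [h]
  · intro i _
    apply Continuous.intervalIntegrable
    fun_prop

lemma intervalIntegral_conj' {f : ℝ → ℂ} {a b : ℝ} :
    ∫ x in a..b, (starRingEnd ℂ) (f x) = (starRingEnd ℂ) (∫ x in a..b, f x) := by
  rw [intervalIntegral_eq_integral_uIoc, intervalIntegral_eq_integral_uIoc,
    _root_.integral_conj]
  split_ifs <;> simp [Complex.real_smul, map_mul]

/-- For a polynomial `g` of degree `n ≥ 1`, the Nevanlinna proximity function of `e^g`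
grows at least like `C rⁿ`. -/
theorem proximity_exp_polynomial_lower_bound (g : Polynomial ℂ) (hg : 1 ≤ g.natDegree) :
    ∃ r₀ : ℝ, 0 < r₀ ∧ ∃ C : ℝ, 0 < C ∧ ∀ r : ℝ, r₀ ≤ r →
      C * r ^ g.natDegree ≤
        (1 / (2 * Real.pi)) *
          ∫ θ in (0 : ℝ)..(2 * Real.pi),
            max (Real.log
              ‖Complex.exp (g.eval ((r : ℂ) * Complex.exp (θ * Complex.I)))‖) 0 := by
  have hg0 : g ≠ 0 := by intro h; simp [h] at hg
  have ha : g.coeff g.natDegree ≠ 0 := Polynomial.leadingCoeff_ne_zero.mpr hg0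
  set n := g.natDegree with hn
  set a := g.coeff n with ha_def
  set A := ‖a‖ with hA
  have hA0 : 0 < A := by rw [hA]; exact (norm_pos_iff.mpr ha)
  set B := ‖g.coeff 0‖ with hB
  have hB0 : 0 ≤ B := norm_nonneg _
  refine ⟨max 1 (4*B/A), lt_max_iff.mpr (Or.inl one_pos), A/8, by positivity, ?_⟩
  intro r hr
  have hr1 : (1:ℝ) ≤ r := le_trans (le_max_left _ _) hr
  have hr0 : (0:ℝ) < r := lt_of_lt_of_le one_pos hr1
  have hrn : 4*B/A ≤ r^n := by
    calc 4*B/A ≤ r := le_trans (le_max_right _ _) hr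
    _ = r^1 := (pow_one r).symm
    _ ≤ r^n := pow_le_pow_right₀ hr1 hg
  have hpi := Real.pi_pos
  have hwc : Continuous (fun θ : ℝ => g.eval ((r:ℂ) * Complex.exp (θ * Complex.I))) := by
    apply (Polynomial.continuous g).comp
    fun_prop
  have hFc : Continuous (fun θ : ℝ => (g.eval ((r:ℂ) * Complex.exp (θ * Complex.I))).re) :=
    Complex.continuous_re.comp hwc
  -- key integrals
  have Ipos : ∫ θ in (0:ℝ)..(2*Real.pi),
      g.eval ((r:ℂ) * Complex.exp (θ * Complex.I)) * Complex.exp (((n:ℤ):ℂ)*θ*Complex.I) = 0 := by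
    rw [poly_int]
    apply Finset.sum_eq_zero
    intro i _
    rw [if_neg]
    omega
  have Ineg : ∫ θ in (0:ℝ)..(2*Real.pi),
      g.eval ((r:ℂ) * Complex.exp (θ * Complex.I)) * Complex.exp (((-(n:ℤ)):ℂ)*θ*Complex.I)
      = 2*(Real.pi:ℂ)*a*(r:ℂ)^n := by
    have h := poly_int g r (-(n:ℤ))
    push_cast at h ⊢
    rw [h, Finset.sum_eq_single n]
    · rw [if_pos (by omega)]
    · intro i hi hne
      rw [if_neg]
      intro hcon
      exact hne (by omega)
    · intro h; exact absurd (Finset.self_mem_range_succ n) h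
  have Izero : ∫ θ in (0:ℝ)..(2*Real.pi),
      g.eval ((r:ℂ) * Complex.exp (θ * Complex.I)) = 2*(Real.pi:ℂ)*(g.coeff 0) := by
    have h := poly_int g r 0
    simp only [Int.cast_zero, zero_mul, Complex.exp_zero, mul_one] at h
    rw [h, Finset.sum_eq_single 0]
    · rw [if_pos (by omega)]; push_cast; ring
    · intro i hi hne
      rw [if_neg]
      intro hcon
      exact hne (by omega)
    · intro h'; exact absurd (Finset.mem_range.mpr (by omega)) h'
  -- the conjugate trick
  have hconj : ∫ θ in (0:ℝ)..(2*Real.pi),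
      (((g.eval ((r:ℂ) * Complex.exp (θ * Complex.I))).re : ℂ)
        * Complex.exp (((-(n:ℤ)):ℂ)*θ*Complex.I))
      = (Real.pi:ℂ) * a * (r:ℂ)^n := by
    have h1 : ∀ θ : ℝ, (((g.eval ((r:ℂ) * Complex.exp (θ * Complex.I))).re : ℂ)
        * Complex.exp (((-(n:ℤ)):ℂ)*θ*Complex.I))
        = (g.eval ((r:ℂ) * Complex.exp (θ * Complex.I)) * Complex.exp (((-(n:ℤ)):ℂ)*θ*Complex.I)
          + (starRingEnd ℂ) (g.eval ((r:ℂ) * Complex.exp (θ * Complex.I))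
              * Complex.exp (((n:ℤ):ℂ)*θ*Complex.I))) / 2 := by
      intro θ
      rw [map_mul, ← Complex.exp_conj]
      have hc : (starRingEnd ℂ) (((n:ℤ):ℂ)*θ*Complex.I) = ((-(n:ℤ)):ℂ)*θ*Complex.I := by
        simp only [map_mul, Complex.conj_I, map_intCast, Complex.conj_ofReal]
        push_cast; ring
      rw [hc]
      have h2 : (((g.eval ((r:ℂ) * Complex.exp (θ * Complex.I))).re : ℝ) : ℂ)
          = (g.eval ((r:ℂ) * Complex.exp (θ * Complex.I))
             + (starRingEnd ℂ) (g.eval ((r:ℂ) * Complex.exp (θ * Complex.I)))) / 2 := by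
        rw [Complex.add_conj]; push_cast; ring
      rw [h2]; ring
    simp_rw [h1]
    rw [intervalIntegral.integral_div, intervalIntegral.integral_add
      (show IntervalIntegrable (fun θ : ℝ =>
          g.eval ((r:ℂ) * Complex.exp (θ * Complex.I))
            * Complex.exp ((-((n:ℤ):ℂ))*θ*Complex.I)) MeasureTheory.volume 0 (2*Real.pi) from
        ((hwc.mul (by fun_prop)).intervalIntegrable _ _))
      (show IntervalIntegrable (fun θ : ℝ => (starRingEnd ℂ)
          (g.eval ((r:ℂ) * Complex.exp (θ * Complex.I))
            * Complex.exp ((((n:ℤ):ℂ))*θ*Complex.I))) MeasureTheory.volume 0 (2*Real.pi) from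
        ((continuous_star.comp (hwc.mul (by fun_prop))).intervalIntegrable _ _)),
      Ineg, intervalIntegral_conj', Ipos, map_zero, add_zero]
    push_cast; ring
  -- lower bound on the integral of |Re|
  have hnorm : Real.pi * A * r^n ≤ ∫ θ in (0:ℝ)..(2*Real.pi),
      |(g.eval ((r:ℂ) * Complex.exp (θ * Complex.I))).re| := by
    have h1 : Real.pi * A * r^n = ‖(Real.pi:ℂ) * a * (r:ℂ)^n‖ := by
      rw [norm_mul, norm_mul, norm_pow, Complex.norm_real, Complex.norm_real,
        Real.norm_eq_abs, Real.norm_eq_abs,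
        abs_of_pos hpi, abs_of_pos hr0, hA]
    rw [h1, ← hconj]
    have h2 := intervalIntegral.norm_integral_le_integral_norm
      (f := fun θ : ℝ => (((g.eval ((r:ℂ) * Complex.exp (θ * Complex.I))).re : ℂ)
        * Complex.exp ((-((n:ℤ):ℂ))*θ*Complex.I))) (μ := MeasureTheory.volume)
      (by positivity : (0:ℝ) ≤ 2*Real.pi)
    refine le_trans h2 (le_of_eq ?_)
    apply intervalIntegral.integral_congr
    intro θ _
    dsimp only
    rw [norm_mul, Complex.norm_real, Real.norm_eq_abs,
      Complex.norm_exp]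
    have : ((-((n:ℤ):ℂ))*θ*Complex.I).re = 0 := by
      simp [Complex.mul_re, Complex.mul_im]
    rw [this, Real.exp_zero, mul_one]
  -- value of the integral of Re
  have hFval : ∫ θ in (0:ℝ)..(2*Real.pi), (g.eval ((r:ℂ) * Complex.exp (θ * Complex.I))).re
      = (2*(Real.pi:ℂ)*(g.coeff 0)).re := by
    have hpt : ∀ θ : ℝ, (((g.eval ((r:ℂ) * Complex.exp (θ * Complex.I))).re : ℝ) : ℂ)
        = (g.eval ((r:ℂ) * Complex.exp (θ * Complex.I))
           + (starRingEnd ℂ) (g.eval ((r:ℂ) * Complex.exp (θ * Complex.I)))) / 2 := by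
      intro θ; rw [Complex.add_conj]; push_cast; ring
    have hsum : (((∫ θ in (0:ℝ)..(2*Real.pi),
        (g.eval ((r:ℂ) * Complex.exp (θ * Complex.I))).re) : ℝ) : ℂ)
        = ((2*(Real.pi:ℂ)*(g.coeff 0)).re : ℂ) := by
      rw [← intervalIntegral.integral_ofReal]
      simp_rw [hpt]
      rw [intervalIntegral.integral_div, intervalIntegral.integral_add
        (hwc.intervalIntegrable _ _)
        (show IntervalIntegrable (fun θ : ℝ => (starRingEnd ℂ)
            (g.eval ((r:ℂ) * Complex.exp (θ * Complex.I)))) MeasureTheory.volume 0 (2*Real.pi)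
          from ((continuous_star.comp hwc).intervalIntegrable _ _)),
        Izero, intervalIntegral_conj', Izero, Complex.add_conj]
      push_cast; ring
    exact_mod_cast hsum
  have hFlow : -(2*Real.pi*B) ≤ ∫ θ in (0:ℝ)..(2*Real.pi),
      (g.eval ((r:ℂ) * Complex.exp (θ * Complex.I))).re := by
    rw [hFval]
    have h1 : |(2*(Real.pi:ℂ)*(g.coeff 0)).re| ≤ 2*Real.pi*B := by
      refine le_trans (Complex.abs_re_le_norm _) (le_of_eq ?_)
      rw [norm_mul, norm_mul, hB]
      simp [abs_of_pos hpi]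
    cases' abs_le.mp h1 with h2 h3
    linarith
  -- split the max
  have hmax : ∫ θ in (0:ℝ)..(2*Real.pi), max ((g.eval ((r:ℂ) * Complex.exp (θ * Complex.I))).re) 0
      = ((∫ θ in (0:ℝ)..(2*Real.pi), |(g.eval ((r:ℂ) * Complex.exp (θ * Complex.I))).re|)
        + ∫ θ in (0:ℝ)..(2*Real.pi), (g.eval ((r:ℂ) * Complex.exp (θ * Complex.I))).re)/2 := by
    have hpt : ∀ x : ℝ, max x 0 = (|x| + x)/2 := by
      intro x; rcases le_total 0 x with h|h
      · rw [max_eq_left h, _root_.abs_of_nonneg h]; ring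
      · rw [max_eq_right h, _root_.abs_of_nonpos h]; ring
    simp_rw [hpt]
    rw [intervalIntegral.integral_div, intervalIntegral.integral_add
      (hFc.abs.intervalIntegrable _ _) (hFc.intervalIntegrable _ _)]
  -- rewrite the integrand of the goal
  simp only [Complex.norm_exp, Real.log_exp]
  rw [hmax]
  have h4B : 4*B ≤ A*r^n := by
    rw [div_le_iff₀ hA0] at hrn; linarith
  rw [show (1:ℝ)/(2*Real.pi) * (((∫ θ in (0:ℝ)..(2*Real.pi),
      |(g.eval ((r:ℂ) * Complex.exp (θ * Complex.I))).re|)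
      + ∫ θ in (0:ℝ)..(2*Real.pi), (g.eval ((r:ℂ) * Complex.exp (θ * Complex.I))).re)/2)
    = (((∫ θ in (0:ℝ)..(2*Real.pi), |(g.eval ((r:ℂ) * Complex.exp (θ * Complex.I))).re|)
      + ∫ θ in (0:ℝ)..(2*Real.pi), (g.eval ((r:ℂ) * Complex.exp (θ * Complex.I))).re))
      / (4*Real.pi) from by ring]
  rw [le_div_iff₀ (by positivity)]
  nlinarith [mul_nonneg hpi.le (sub_nonneg.mpr h4B), hnorm, hFlow]
end

section
/- Let a, b, c ∈ ℂ with a ≠ 0, and set f(z) := exp(a z² + b z + c), whose derivative is f′(z) = (2az + b)·f(z). Define the Fubini–Study energy density e_f(z) := (1/π)·|f′(z)|²/(1 + |f(z)|²)². Then for every ε > 0 there exists an open set E ⊆ [0, 2π] with Lebesgue measure |E| < ε such that ∫_{[0,2π]∖E} ( ∫₀^∞ e_f(r e^{iθ}) · r dr ) dθ < ∞. -/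
open MeasureTheory

/-- Fubini–Study energy density `|df|²` of an entire function `f` viewed as a curve in
`ℂP¹` with the Fubini–Study metric of total area 1. -/
noncomputable def fsDensityOne (f : ℂ → ℂ) (z : ℂ) : ℝ :=
  (1 / Real.pi) * ‖deriv f z‖ ^ 2 / (1 + ‖f z‖ ^ 2) ^ 2

set_option maxHeartbeats 1000000 in
/-- The main pointwise bound: on rays where the quadratic term dominates, the energy density
times `r` is dominated by a fixed gaussian-type integrable function. -/
lemma fs_bound (a b c : ℂ) (δ θ r : ℝ) (hδ : 0 < δ)
    (hg : δ ≤ |(a * Complex.exp ((θ:ℂ)*Complex.I)^2).re|) (hr : 0 < r) :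
    fsDensityOne (fun z => Complex.exp (a*z^2+b*z+c)) ((r:ℂ) * Complex.exp ((θ:ℂ)*Complex.I)) * r ≤
    (1/Real.pi) * Real.exp (‖b‖^2/δ + 2*‖c‖) *
      ((2*‖a‖*r + ‖b‖)^2 * r * Real.exp (-δ*r^2)) := by
  set z : ℂ := (r:ℂ) * Complex.exp ((θ:ℂ)*Complex.I) with hz
  set A := ‖a‖
  set B := ‖b‖
  set Cc := ‖c‖
  set u : ℝ := (a*z^2+b*z+c).re with hu
  set X : ℝ := Real.exp u with hX
  set q : ℝ := ‖2*a*z+b‖ with hqdef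
  have hq0 : 0 ≤ q := norm_nonneg _
  have hπ : 0 < Real.pi := Real.pi_pos
  -- derivative
  have hF : HasDerivAt (fun w : ℂ => Complex.exp (a*w^2+b*w+c))
      (Complex.exp (a*z^2+b*z+c) * (2*a*z+b)) z := by
    have hP : HasDerivAt (fun w : ℂ => a*w^2+b*w+c) (2*a*z+b) z := by
      simpa [mul_comm, mul_assoc, mul_left_comm] using
        (((hasDerivAt_pow 2 z).const_mul a).add ((hasDerivAt_id z).const_mul b)).add_const c
    exact hP.cexp
  have habs_deriv : ‖deriv (fun w : ℂ => Complex.exp (a*w^2+b*w+c)) z‖ = X * q := by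
    rw [hF.deriv, norm_mul, Complex.norm_exp]
  have habs_f : ‖Complex.exp (a*z^2+b*z+c)‖ = X := Complex.norm_exp _
  have hzabs : ‖z‖ = r := by
    rw [hz, norm_mul, Complex.norm_real, Real.norm_eq_abs, Complex.norm_exp_ofReal_mul_I, abs_of_pos hr, mul_one]
  -- bound on q
  have hq : q ≤ 2*A*r + B := by
    calc q ≤ ‖2*a*z‖ + ‖b‖ := norm_add_le _ _
    _ = 2*A*r + B := by
        rw [norm_mul, norm_mul, hzabs, Complex.norm_two]
        try ring
  -- decomposition of u
  have hbe : |(b * Complex.exp ((θ:ℂ)*Complex.I)).re| ≤ B := by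
    refine (Complex.abs_re_le_norm _).trans ?_
    rw [norm_mul, Complex.norm_exp_ofReal_mul_I, mul_one]
  have hce : |c.re| ≤ Cc := Complex.abs_re_le_norm c
  have hu_decomp : u = r^2 * (a * Complex.exp ((θ:ℂ)*Complex.I)^2).re
      + (r * (b * Complex.exp ((θ:ℂ)*Complex.I)).re + c.re) := by
    have h1 : a*z^2+b*z+c = ((r^2:ℝ):ℂ) * (a * Complex.exp ((θ:ℂ)*Complex.I)^2)
        + (((r:ℝ):ℂ) * (b * Complex.exp ((θ:ℂ)*Complex.I)) + c) := by
      rw [hz]; push_cast; ring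
    rw [hu, h1, Complex.add_re, Complex.add_re, Complex.re_ofReal_mul, Complex.re_ofReal_mul]
  -- lower bound on |u|
  have key : δ*r^2 - (B*r + Cc) ≤ |u| := by
    set G := (a * Complex.exp ((θ:ℂ)*Complex.I)^2).re
    set H := r * (b * Complex.exp ((θ:ℂ)*Complex.I)).re + c.re
    have h3 : δ*r^2 ≤ |r^2 * G| := by
      rw [abs_mul, abs_of_nonneg (sq_nonneg r)]
      calc δ*r^2 = r^2 * δ := by ring
      _ ≤ r^2 * |G| := by
          exact mul_le_mul_of_nonneg_left hg (sq_nonneg r)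
    have h4 : |H| ≤ B*r + Cc := by
      refine (abs_add_le _ _).trans ?_
      rw [abs_mul, abs_of_pos hr]
      have := hbe
      nlinarith
    have h5 : |r^2*G| - |H| ≤ |u| := by
      rw [hu_decomp]
      have := abs_add_le (r^2*G + H) (-H)
      simp only [add_neg_cancel_right, abs_neg] at this
      linarith
    linarith
  -- fraction bound
  have hX2 : X^2 = Real.exp (2*u) := by rw [hX, sq, ← Real.exp_add]; ring_nf
  have hXfrac : X^2 / (1+X^2)^2 ≤ Real.exp (-(2*|u|)) := by
    have ht : 0 < Real.exp (2*u) := Real.exp_pos _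
    have he : 0 < Real.exp (-(2*|u|)) := Real.exp_pos _
    rw [hX2, div_le_iff₀ (by positivity)]
    rcases le_or_gt 0 u with h | h
    · have hmul : Real.exp (-(2*|u|)) * Real.exp (2*u) = 1 := by
        rw [abs_of_nonneg h, ← Real.exp_add]; ring_nf; exact Real.exp_zero
      nlinarith [mul_pos he ht]
    · have habs : |u| = -u := abs_of_neg h
      have heq : Real.exp (-(2*|u|)) = Real.exp (2*u) := by rw [habs]; ring_nf
      rw [heq]
      nlinarith [ht, mul_pos ht ht, mul_pos (mul_pos ht ht) ht]
  have hexp2 : Real.exp (-(2*|u|)) ≤ Real.exp (B^2/δ + 2*Cc) * Real.exp (-δ*r^2) := by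
    rw [← Real.exp_add]
    apply Real.exp_le_exp.2
    have hBd : B^2/δ * δ = B^2 := div_mul_cancel₀ _ hδ.ne'
    nlinarith [sq_nonneg (δ*r - B), key, hδ]
  -- combine
  have hfs : fsDensityOne (fun w : ℂ => Complex.exp (a*w^2+b*w+c)) z * r
      = (1/Real.pi) * q^2 * r * (X^2/(1+X^2)^2) := by
    rw [fsDensityOne]
    rw [habs_deriv]
    rw [habs_f]
    ring
  rw [hfs]
  have e1 : (0:ℝ) ≤ X^2/(1+X^2)^2 := by positivity
  calc (1/Real.pi) * q^2 * r * (X^2/(1+X^2)^2)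
      ≤ (1/Real.pi) * (2*A*r+B)^2 * r * (Real.exp (B^2/δ + 2*Cc) * Real.exp (-δ*r^2)) := by
        apply mul_le_mul _ (hXfrac.trans hexp2) e1
        · exact mul_nonneg (by positivity) hr.le
        · apply mul_le_mul_of_nonneg_right _ hr.le
          apply mul_le_mul_of_nonneg_left _ (by positivity)
          exact pow_le_pow_left₀ hq0 hq 2
    _ = (1/Real.pi) * Real.exp (B^2/δ + 2*Cc) * ((2*A*r + B)^2 * r * Real.exp (-δ*r^2)) := by
        ring

/-- The gaussian-type dominating function is integrable. -/
lemma h_integrable (A B K δ : ℝ) (hδ : 0 < δ) :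
    Integrable (fun r : ℝ => K * ((2*A*r+B)^2 * r * Real.exp (-δ*r^2))) := by
  have h3 : Integrable (fun x : ℝ => x^3 * Real.exp (-δ*x^2)) := by
    have h := integrable_rpow_mul_exp_neg_mul_sq hδ (s := (3:ℝ)) (by norm_num)
    refine h.congr (Filter.Eventually.of_forall fun x => ?_)
    beta_reduce
    rw [← Real.rpow_natCast x 3]; norm_num
  have h2 : Integrable (fun x : ℝ => x^2 * Real.exp (-δ*x^2)) := by
    have h := integrable_rpow_mul_exp_neg_mul_sq hδ (s := (2:ℝ)) (by norm_num)
    refine h.congr (Filter.Eventually.of_forall fun x => ?_)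
    beta_reduce
    rw [← Real.rpow_natCast x 2]; norm_num
  have h1 : Integrable (fun x : ℝ => x^1 * Real.exp (-δ*x^2)) := by
    have h := integrable_rpow_mul_exp_neg_mul_sq hδ (s := (1:ℝ)) (by norm_num)
    refine h.congr (Filter.Eventually.of_forall fun x => ?_)
    beta_reduce
    rw [← Real.rpow_natCast x 1]; norm_num
  have := (((h3.const_mul (K*4*A^2)).add (h2.const_mul (K*4*A*B))).add (h1.const_mul (K*B^2)))
  refine this.congr (Filter.Eventually.of_forall fun x => ?_)
  simp only [Pi.add_apply]
  ring

/-- For `f(z) = exp(az² + bz + c)` with `a ≠ 0`: outside an open set of angles of measure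
`< ε`, the radial integrals of the energy density have finite total mass. -/
theorem exp_quadratic_radial_integral_finite (a b c : ℂ) (ha : a ≠ 0) :
    ∀ ε : ℝ, 0 < ε → ∃ E : Set ℝ, IsOpen E ∧ E ⊆ Set.Icc 0 (2 * Real.pi) ∧
      volume E < ENNReal.ofReal ε ∧
      (∫⁻ θ in Set.Icc 0 (2 * Real.pi) \ E,
        ∫⁻ r in Set.Ioi (0 : ℝ),
          ENNReal.ofReal
            (fsDensityOne (fun z => Complex.exp (a * z ^ 2 + b * z + c))
              ((r : ℂ) * Complex.exp (θ * Complex.I)) * r)) < ⊤ := by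
  intro ε hε
  set g : ℝ → ℝ := fun θ => (a * Complex.exp ((θ:ℂ)*Complex.I)^2).re with hgdef
  have hgcont : Continuous g := by
    apply Complex.continuous_re.comp
    exact continuous_const.mul ((Complex.continuous_exp.comp
      (Complex.continuous_ofReal.mul continuous_const)).pow 2)
  -- zero set of g is null
  have hgeq : ∀ θ, g θ = ‖a‖ * Real.cos (Complex.arg a + 2*θ) := by
    intro θ
    have h2 : Complex.exp ((θ:ℂ)*Complex.I)^2 = Complex.exp (((2*θ:ℝ):ℂ)*Complex.I) := by
      rw [sq, ← Complex.exp_add]; push_cast; ring_nf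
    have h1 : a * Complex.exp ((θ:ℂ)*Complex.I)^2
        = ((‖a‖ : ℝ):ℂ) * Complex.exp (((Complex.arg a + 2*θ : ℝ):ℂ) * Complex.I) := by
      conv_lhs => rw [← Complex.norm_mul_exp_arg_mul_I a]
      rw [h2, mul_assoc, ← Complex.exp_add]
      push_cast; ring_nf
    rw [hgdef]; simp only
    rw [h1, Complex.re_ofReal_mul, Complex.exp_ofReal_mul_I_re]
  have hZ0 : volume (g⁻¹' {0}) = 0 := by
    refine measure_mono_null (t := Set.range (fun k : ℤ => ((2*(k:ℝ)+1)*Real.pi/2 - Complex.arg a)/2))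
      ?_ ((Set.countable_range _).measure_zero _)
    intro θ hθ
    rw [Set.mem_preimage, Set.mem_singleton_iff, hgeq θ] at hθ
    have ha' : ‖a‖ ≠ 0 := by simpa using ha
    have hcos : Real.cos (Complex.arg a + 2*θ) = 0 := by
      rcases mul_eq_zero.1 hθ with h | h
      · exact absurd h ha'
      · exact h
    obtain ⟨k, hk⟩ := Real.cos_eq_zero_iff.1 hcos
    exact ⟨k, by simp only; linarith⟩
  -- choose a good cutoff
  set S : ℕ → Set ℝ := fun n => Set.Ioo 0 (2*Real.pi) ∩ {θ | |g θ| < 1/(n+1)} with hSdef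
  have hSopen : ∀ n, IsOpen (S n) := fun n =>
    isOpen_Ioo.inter (isOpen_lt (continuous_abs.comp hgcont) continuous_const)
  have hSmeas : ∀ n, NullMeasurableSet (S n) volume := fun n =>
    (hSopen n).measurableSet.nullMeasurableSet
  have hanti : Antitone S := by
    intro m n hmn
    apply Set.inter_subset_inter_right
    intro θ hθ
    simp only [Set.mem_setOf_eq] at hθ ⊢
    refine lt_of_lt_of_le hθ ?_
    apply one_div_le_one_div_of_le (by positivity)
    exact_mod_cast by exact_mod_cast add_le_add_left (Nat.cast_le.2 hmn) 1
  have hsub : (⋂ n, S n) ⊆ g⁻¹' {0} := by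
    intro θ hθ
    simp only [Set.mem_iInter, hSdef, Set.mem_inter_iff, Set.mem_setOf_eq] at hθ
    have : |g θ| = 0 := by
      by_contra h
      have hpos : 0 < |g θ| := lt_of_le_of_ne (abs_nonneg _) (Ne.symm h)
      obtain ⟨n, hn⟩ := exists_nat_one_div_lt hpos
      exact absurd ((hθ n).2) (not_lt.2 hn.le)
    simpa [abs_eq_zero] using this
  have hfin : volume (S 0) ≠ ⊤ :=
    (lt_of_le_of_lt (measure_mono Set.inter_subset_left) measure_Ioo_lt_top).ne
  have htend := tendsto_measure_iInter_atTop hSmeas hanti ⟨0, hfin⟩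
  have h0 : volume (⋂ n, S n) = 0 := measure_mono_null hsub hZ0
  rw [h0] at htend
  obtain ⟨n, hn⟩ := (htend.eventually (Iio_mem_nhds (ENNReal.ofReal_pos.2 hε))).exists
  set δ : ℝ := 1/((n:ℝ)+1) with hδdef
  have hδ : 0 < δ := by positivity
  refine ⟨S n, hSopen n, Set.inter_subset_left.trans Set.Ioo_subset_Icc_self, hn, ?_⟩
  -- the dominating constant
  set A := ‖a‖
  set B := ‖b‖
  set Cc := ‖c‖
  set K : ℝ := (1/Real.pi) * Real.exp (B^2/δ + 2*Cc) with hKdef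
  set h : ℝ → ℝ := fun r => K * ((2*A*r+B)^2 * r * Real.exp (-δ*r^2)) with hhdef
  have hInt : IntegrableOn h (Set.Ioi (0:ℝ)) := (h_integrable A B K δ hδ).integrableOn
  have hh0 : 0 ≤ᵐ[volume.restrict (Set.Ioi (0:ℝ))] h := by
    filter_upwards [ae_restrict_mem measurableSet_Ioi] with r hr
    have hK : 0 ≤ K := by rw [hKdef]; positivity
    exact mul_nonneg hK (mul_nonneg (mul_nonneg (sq_nonneg _) (le_of_lt hr)) (Real.exp_nonneg _))
  -- inner bound
  have inner : ∀ θ : ℝ, δ ≤ |g θ| →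
      (∫⁻ r in Set.Ioi (0:ℝ),
        ENNReal.ofReal
          (fsDensityOne (fun z => Complex.exp (a * z ^ 2 + b * z + c))
            ((r : ℂ) * Complex.exp (θ * Complex.I)) * r)) ≤
      ENNReal.ofReal (∫ r in Set.Ioi (0:ℝ), h r) := by
    intro θ hgθ
    rw [ofReal_integral_eq_lintegral_ofReal hInt hh0]
    refine setLIntegral_mono' measurableSet_Ioi fun r hr => ?_
    exact ENNReal.ofReal_le_ofReal (fs_bound a b c δ θ r hδ hgθ hr)
  -- outer accounting
  have h_ae : (Set.Icc 0 (2*Real.pi) \ S n : Set ℝ) =ᵐ[volume] Set.Ioo 0 (2*Real.pi) \ S n :=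
    (Ioo_ae_eq_Icc (μ := volume) (a := (0:ℝ)) (b := 2*Real.pi)).symm.diff Filter.EventuallyEq.rfl
  calc (∫⁻ θ in Set.Icc 0 (2 * Real.pi) \ S n,
        ∫⁻ r in Set.Ioi (0 : ℝ),
          ENNReal.ofReal
            (fsDensityOne (fun z => Complex.exp (a * z ^ 2 + b * z + c))
              ((r : ℂ) * Complex.exp (θ * Complex.I)) * r))
      = (∫⁻ θ in Set.Ioo 0 (2 * Real.pi) \ S n,
        ∫⁻ r in Set.Ioi (0 : ℝ),
          ENNReal.ofReal
            (fsDensityOne (fun z => Complex.exp (a * z ^ 2 + b * z + c))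
              ((r : ℂ) * Complex.exp (θ * Complex.I)) * r)) := setLIntegral_congr h_ae
    _ ≤ ∫⁻ _ in Set.Ioo 0 (2 * Real.pi) \ S n,
          ENNReal.ofReal (∫ r in Set.Ioi (0:ℝ), h r) := by
        refine setLIntegral_mono' (measurableSet_Ioo.diff (hSopen n).measurableSet)
          fun θ hθ => ?_
        apply inner
        by_contra hcon
        push_neg at hcon
        exact hθ.2 ⟨hθ.1, hcon⟩
    _ = ENNReal.ofReal (∫ r in Set.Ioi (0:ℝ), h r)
          * volume (Set.Ioo 0 (2 * Real.pi) \ S n) := setLIntegral_const _ _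
    _ < ⊤ := ENNReal.mul_lt_top ENNReal.ofReal_lt_top
        (lt_of_le_of_lt (measure_mono Set.diff_subset) measure_Ioo_lt_top)
end
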